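/- arXiv:2403.02876 — 6 statements merged into one kernel-verified Lean document; each statement's English description precedes it below -/
import Mathlib

section
/- Let A be a commutative integral domain and let a, b ∈ A be nonzero elements. If the image of b in the quotient ring A/(a) is not a zero divisor, then the quotient ring A[T]/(bT − a) of the polynomial ring A[T] by the principal ideal generated by bT − a is an integral domain. -/
/-!
The polynomial `b X - a` is the kernel generator of evaluation at `a / b` in the fraction field,
so the quotient embeds into a field. If `f (a / b) = 0`, homogenising gives
`b X - a ∣ b ^ deg f * f` (evaluate `(scaleRoots f b) (Y) - (scaleRoots f b) (a)` at `Y = b X`).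
The powers of `b` are then cancelled one at a time: reducing `b f = (b X - a) q` modulo `a`
and using that `b` is regular modulo `a` gives `a ∣ f - X q`, and then `q` is a multiple of `b`.
-/

open Polynomial
open scoped nonZeroDivisors

namespace Polynomial

variable {R : Type*} [CommRing R] {a b : R}

theorem C_mul_X_sub_C_dvd_of_dvd_C_mul (ha : a ∈ R⁰)
    (hb : Ideal.Quotient.mk (Ideal.span {a}) b ∈ (R ⧸ Ideal.span {a})⁰) {f : R[X]}
    (hf : C b * X - C a ∣ C b * f) : C b * X - C a ∣ f := by
  obtain ⟨q, hq⟩ := hf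
  set π := Ideal.Quotient.mk (Ideal.span {a})
  have hπa : π a = 0 := Ideal.Quotient.eq_zero_iff_mem.mpr (Ideal.mem_span_singleton_self a)
  have hmod : f.map π = X * q.map π := by
    refine (mul_cancel_left_mem_nonZeroDivisors
      (mem_nonZeroDivisors_of_leadingCoeff (p := C (π b)) (by rwa [leadingCoeff_C]))).mp ?_
    simpa [hπa, mul_assoc] using congrArg (map π) hq
  obtain ⟨h, hh⟩ : C a ∣ f - X * q := by
    have hker : f - X * q ∈ RingHom.ker (mapRingHom π) := by
      simp [RingHom.mem_ker, hmod]
    rwa [ker_mapRingHom, Ideal.mk_ker, Ideal.map_span, Set.image_singleton,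
      Ideal.mem_span_singleton] at hker
  have hq' : q = -(C b * h) := by
    have hCa : C a ∈ R[X]⁰ := mem_nonZeroDivisors_of_leadingCoeff (by rwa [leadingCoeff_C])
    refine eq_neg_of_add_eq_zero_left ((mul_cancel_left_mem_nonZeroDivisors hCa).mp ?_)
    linear_combination hq - C b * hh
  exact ⟨-h, by linear_combination hh + X * hq'⟩

theorem C_mul_X_sub_C_dvd_of_dvd_C_pow_mul (ha : a ∈ R⁰)
    (hb : Ideal.Quotient.mk (Ideal.span {a}) b ∈ (R ⧸ Ideal.span {a})⁰) (n : ℕ) {f : R[X]}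
    (hf : C b * X - C a ∣ C b ^ n * f) : C b * X - C a ∣ f := by
  induction n generalizing f with
  | zero => simpa using hf
  | succ n ih =>
    refine C_mul_X_sub_C_dvd_of_dvd_C_mul ha hb (ih ?_)
    rwa [← mul_assoc, ← pow_succ]

theorem C_mul_X_sub_C_dvd_C_pow_mul_of_aeval_div_eq_zero {K : Type*} [Field K] [Algebra R K]
    (inj : Function.Injective (algebraMap R K)) (hb : b ∈ R⁰) {f : R[X]}
    (hf : aeval (algebraMap R K a / algebraMap R K b) f = 0) :
    C b * X - C a ∣ C b ^ f.natDegree * f := by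
  have hroot : (f.scaleRoots b).eval a = 0 := inj <| by
    rw [← aeval_algebraMap_apply_eq_algebraMap_eval, map_zero]
    exact scaleRoots_aeval_eq_zero_of_aeval_div_eq_zero inj hf hb
  have hsubst : eval₂ C (C b * X) (f.scaleRoots b) = C b ^ f.natDegree * f := by
    rw [scaleRoots_eval₂_mul, eval₂_C_X]
  have hdvd := _root_.map_dvd (eval₂RingHom (C : R →+* R[X]) (C b * X))
    (X_sub_C_dvd_sub_C_eval (p := f.scaleRoots b) (a := a))
  rw [← hsubst]
  simpa [hroot] using hdvd

theorem ker_aeval_div_eq_span_C_mul_X_sub_C {K : Type*} [Field K] [Algebra R K]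
    (inj : Function.Injective (algebraMap R K)) (ha : a ∈ R⁰) (hb : b ∈ R⁰)
    (hba : Ideal.Quotient.mk (Ideal.span {a}) b ∈ (R ⧸ Ideal.span {a})⁰) :
    RingHom.ker (aeval (algebraMap R K a / algebraMap R K b)) =
      Ideal.span {C b * X - C a} := by
  ext f
  rw [RingHom.mem_ker, Ideal.mem_span_singleton]
  constructor
  · intro hf
    exact C_mul_X_sub_C_dvd_of_dvd_C_pow_mul ha hba _
      (C_mul_X_sub_C_dvd_C_pow_mul_of_aeval_div_eq_zero inj hb hf)
  · rintro ⟨q, rfl⟩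
    have := (algebraMap R K).domain_nontrivial
    have hb' : algebraMap R K b ≠ 0 := map_ne_zero_of_mem_nonZeroDivisors _ inj hb
    simp [mul_div_cancel₀ _ hb']

end Polynomial

/-- Let `A` be a commutative integral domain and `a, b ∈ A` nonzero.
If the image of `b` in `A/(a)` is not a zero divisor, then `A[T]/(bT - a)` is an
integral domain. -/
theorem stmt_0 {A : Type*} [CommRing A] [IsDomain A] (a b : A) (ha : a ≠ 0) (hb : b ≠ 0)
    (h : Ideal.Quotient.mk (Ideal.span {a}) b ∈ nonZeroDivisors (A ⧸ Ideal.span ({a} : Set A))) :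
    IsDomain (Polynomial A ⧸
      Ideal.span ({Polynomial.C b * Polynomial.X - Polynomial.C a} : Set (Polynomial A))) := by
  rw [← ker_aeval_div_eq_span_C_mul_X_sub_C (IsFractionRing.injective A (FractionRing A))
    (mem_nonZeroDivisors_of_ne_zero ha) (mem_nonZeroDivisors_of_ne_zero hb) h]
  exact (Ideal.Quotient.isDomain_iff_prime _).mpr (RingHom.ker_isPrime _)
end

section
/- Let k be a field, let A be an affine k-domain, let B be an integral domain that is a finitely generated A-algebra with injective structure map A → B, and let S be a multiplicatively closed subset of A \ {0}. Then ML_{S⁻¹A}(S⁻¹B) = S⁻¹(ML_A(B)), i.e., the Makar-Limanov invariant of the localization S⁻¹B relative to S⁻¹A equals the localization at S of the Makar-Limanov invariant of B relative to A. -/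
/-- An exponential map on a `k`-algebra `B`: a `k`-algebra homomorphism
`δ : B → B[U]` such that evaluation at `U = 0` composed with `δ` is the identity, and
`δ_V ∘ δ_U = δ_{U+V}` (where `δ_V` is extended to `B[U]` by `δ_V(U) = U`, i.e. applied
to the coefficients, and `δ_{U+V}` is obtained from `δ` by substituting `U + V` for
the variable). -/
structure ExponentialMap (k B : Type*) [CommRing k] [CommRing B] [Algebra k B] where
  toAlgHom : B →ₐ[k] Polynomial B
  eval_zero : ∀ b : B, Polynomial.eval 0 (toAlgHom b) = b
  coassoc : ∀ b : B,
    Polynomial.map toAlgHom.toRingHom (toAlgHom b) =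
      Polynomial.eval₂ (Polynomial.C.comp Polynomial.C)
        (Polynomial.X + Polynomial.C Polynomial.X) (toAlgHom b)

/-- `b ∈ B` is invariant under the exponential map `δ`, i.e. `δ(b) = b`. -/
def ExponentialMap.Fixes {k B : Type*} [CommRing k] [CommRing B] [Algebra k B]
    (δ : ExponentialMap k B) (b : B) : Prop :=
  δ.toAlgHom b = Polynomial.C b

/-- The Makar-Limanov invariant `ML_A(B)` of `B` relative to a subset `A ⊆ B`: the
intersection of the rings of invariants `B^δ` over all exponential maps `δ` on `B`
with `A ⊆ B^δ`. -/
def mlSet (k : Type*) {B : Type*} [CommRing k] [CommRing B] [Algebra k B]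
    (A : Set B) : Set B :=
  {b : B | ∀ δ : ExponentialMap k B, (∀ a ∈ A, δ.Fixes a) → δ.Fixes b}

/-! An exponential map `δ` of `B` fixing `A` fixes `S`, so it extends to `S⁻¹B`, where it
fixes `S⁻¹A`; this gives `ML_{S⁻¹A}(S⁻¹B) ⊆ S⁻¹ML_A(B)`. Conversely, an exponential map `δ` of
`S⁻¹B` fixing `S⁻¹A` need not map `B` into `B[U]`. But `B` is generated over `A` by finitely many
`g`, and a single `s ∈ S` clears the denominators of all coefficients of all `δ(g)`. Since `s` is
invariant, `b ↦ δ(b)(sU)` is again an exponential map with the same invariants as `δ`, and it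
restricts to an exponential map of `B` fixing `A`, hence fixing `ML_A(B)`. -/

open Polynomial

namespace ExponentialMap

variable {k R : Type*} [CommRing k] [CommRing R]

section

variable [Algebra k R]

theorem coassoc_ringHom (δ : ExponentialMap k R) :
    (mapRingHom δ.toAlgHom.toRingHom).comp δ.toAlgHom.toRingHom =
      (eval₂RingHom (C.comp C) (X + C X)).comp δ.toAlgHom.toRingHom :=
  RingHom.ext δ.coassoc

theorem coeff_zero_apply (δ : ExponentialMap k R) (b : R) : (δ.toAlgHom b).coeff 0 = b := by
  rw [coeff_zero_eq_eval_zero, δ.eval_zero]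

theorem fixes_iff_coeff_eq_zero (δ : ExponentialMap k R) {b : R} :
    δ.Fixes b ↔ ∀ n, n ≠ 0 → (δ.toAlgHom b).coeff n = 0 := by
  rw [Fixes, Polynomial.ext_iff]
  refine forall_congr' fun n => ?_
  rcases eq_or_ne n 0 with rfl | hn
  · simp [coeff_zero_apply]
  · simp [coeff_C, hn]

theorem fixes_mul (δ : ExponentialMap k R) {a b : R} (ha : δ.Fixes a) (hb : δ.Fixes b) :
    δ.Fixes (a * b) := by
  rw [Fixes, map_mul, ha, hb, C_mul]

theorem fixes_of_mul_eq (δ : ExponentialMap k R) {u v x : R} (hu : δ.Fixes u)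
    (hv : δ.Fixes v) (hunit : IsUnit u) (hx : x * u = v) : δ.Fixes x := by
  have h : δ.toAlgHom x * C u = C x * C u := by
    rw [← C_mul, hx, ← hv, ← hx, map_mul, hu]
  exact (hunit.map C).mul_left_inj.mp h

/-- The exponential map `b ↦ δ(b)(tU)`. -/
noncomputable def twist (δ : ExponentialMap k R) (t : R) (ht : δ.Fixes t) :
    ExponentialMap k R where
  toAlgHom :=
    { toRingHom := (compRingHom (C t * X)).comp δ.toAlgHom.toRingHom
      commutes' := fun c => by simp [Polynomial.algebraMap_apply] }
  eval_zero b := by simp [eval_comp, δ.eval_zero]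
  coassoc b := by
    set σ : R[X] →+* R[X] := compRingHom (C t * X)
    set D := δ.toAlgHom.toRingHom
    set Δ : R[X] →+* R[X][X] := eval₂RingHom (C.comp C) (X + C X)
    -- `σ₂` rescales both variables of `R[U][V]` by `t`.
    set σ₂ : R[X][X] →+* R[X][X] := eval₂RingHom (C.comp σ) (C (C t) * X)
    have hDt : D t = C t := ht
    have hmap : (mapRingHom (σ.comp D)).comp σ = σ₂.comp (mapRingHom D) := by
      ext <;> simp [σ, σ₂, hDt]
    have hΔ : Δ.comp σ = σ₂.comp Δ := by
      ext <;> simp [σ, σ₂, Δ, mul_add]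
    have key : (mapRingHom (σ.comp D)).comp (σ.comp D) = Δ.comp (σ.comp D) := by
      rw [← RingHom.comp_assoc, hmap, RingHom.comp_assoc, δ.coassoc_ringHom,
        ← RingHom.comp_assoc, ← hΔ, RingHom.comp_assoc]
    exact RingHom.congr_fun key b

theorem coeff_twist (δ : ExponentialMap k R) {t : R} (ht : δ.Fixes t) (b : R) (n : ℕ) :
    ((δ.twist t ht).toAlgHom b).coeff n = (δ.toAlgHom b).coeff n * t ^ n :=
  comp_C_mul_X_coeff

theorem fixes_twist_iff (δ : ExponentialMap k R) {t : R} (ht : δ.Fixes t) (hu : IsUnit t)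
    {b : R} : (δ.twist t ht).Fixes b ↔ δ.Fixes b := by
  simp only [fixes_iff_coeff_eq_zero, coeff_twist, (hu.pow _).mul_left_eq_zero]

section Localization

variable (M : Submonoid R) (L : Type*) [CommRing L] [Algebra R L] [IsLocalization M L]

theorem isUnit_map_apply_of_fixes (δ : ExponentialMap k R) (hM : ∀ s ∈ M, δ.Fixes s) (s : M) :
    IsUnit ((mapRingHom (algebraMap R L)).comp δ.toAlgHom.toRingHom s) := by
  simpa [show δ.toAlgHom s = C (s : R) from hM s s.2] using
    (IsLocalization.map_units L s).map (C : L →+* L[X])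

variable [Algebra k L] [IsScalarTower k R L]

noncomputable def localize (δ : ExponentialMap k R) (hM : ∀ s ∈ M, δ.Fixes s) :
    ExponentialMap k L where
  toAlgHom :=
    { toRingHom := IsLocalization.lift (δ.isUnit_map_apply_of_fixes M L hM)
      commutes' := fun c => by
        change IsLocalization.lift (δ.isUnit_map_apply_of_fixes M L hM) (algebraMap k L c) = _
        rw [IsScalarTower.algebraMap_apply k R L, IsLocalization.lift_eq]
        simp [Polynomial.algebraMap_apply, ← IsScalarTower.algebraMap_apply] }
  eval_zero := by
    have key : (evalRingHom 0).comp (IsLocalization.lift (δ.isUnit_map_apply_of_fixes M L hM)) =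
        RingHom.id L :=
      IsLocalization.ringHom_ext M <| RingHom.ext fun b => by
        rw [RingHom.comp_apply, RingHom.comp_apply, IsLocalization.lift_eq, RingHom.comp_apply,
          coe_evalRingHom]
        exact (eval_zero_map _ _).trans (congrArg _ (δ.eval_zero b))
    exact RingHom.congr_fun key
  coassoc := by
    set ℓ := IsLocalization.lift (S := L) (δ.isUnit_map_apply_of_fixes M L hM)
    have hℓ : ℓ.comp (algebraMap R L) =
        (mapRingHom (algebraMap R L)).comp δ.toAlgHom.toRingHom :=
      IsLocalization.lift_comp _
    have key : (mapRingHom ℓ).comp ℓ = (eval₂RingHom (C.comp C) (X + C X)).comp ℓ := by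
      refine IsLocalization.ringHom_ext M ?_
      rw [RingHom.comp_assoc, RingHom.comp_assoc, hℓ, ← RingHom.comp_assoc, mapRingHom_comp,
        hℓ, ← mapRingHom_comp, RingHom.comp_assoc, δ.coassoc_ringHom, ← RingHom.comp_assoc,
        ← RingHom.comp_assoc]
      congr 1
      ext <;> simp
    exact RingHom.congr_fun key

theorem localize_apply_algebraMap (δ : ExponentialMap k R) (hM : ∀ s ∈ M, δ.Fixes s) (b : R) :
    (δ.localize M L hM).toAlgHom (algebraMap R L b) = map (algebraMap R L) (δ.toAlgHom b) :=
  IsLocalization.lift_eq _ b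

theorem fixes_localize_algebraMap_iff (hM' : M ≤ nonZeroDivisors R) (δ : ExponentialMap k R)
    (hM : ∀ s ∈ M, δ.Fixes s) {b : R} :
    (δ.localize M L hM).Fixes (algebraMap R L b) ↔ δ.Fixes b := by
  rw [Fixes, Fixes, localize_apply_algebraMap, ← map_C,
    (map_injective _ (IsLocalization.injective L hM')).eq_iff]

end Localization

section Restriction

variable {L : Type*} [CommRing L] [Algebra k L] (τ : ExponentialMap k L) {j : R →ₐ[k] L}
  (hj : Function.Injective j) (hτ : ∀ b, τ.toAlgHom (j b) ∈ lifts (j : R →+* L))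

noncomputable def restrictAlgHom : R →ₐ[k] R[X] :=
  (AlgEquiv.ofInjective (mapAlgHom j) (map_injective _ hj)).symm.toAlgHom.comp
    ((τ.toAlgHom.comp j).codRestrict _ fun b => (AlgHom.mem_range _).2 ((mem_lifts _).1 (hτ b)))

theorem map_restrictAlgHom_apply (b : R) :
    map (j : R →+* L) (τ.restrictAlgHom hj hτ b) = τ.toAlgHom (j b) := by
  change mapAlgHom j ((AlgEquiv.ofInjective _ (map_injective _ hj)).symm _) = _
  rw [← AlgEquiv.ofInjective_apply _ (map_injective _ hj), AlgEquiv.apply_symm_apply]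
  rfl

theorem mapRingHom_comp_restrictAlgHom :
    (mapRingHom (j : R →+* L)).comp (τ.restrictAlgHom hj hτ).toRingHom =
      τ.toAlgHom.toRingHom.comp j :=
  RingHom.ext (τ.map_restrictAlgHom_apply hj hτ)

noncomputable def restrict : ExponentialMap k R where
  toAlgHom := τ.restrictAlgHom hj hτ
  eval_zero b := hj <| by
    change (j : R →+* L) _ = _
    rw [← eval_zero_map, map_restrictAlgHom_apply, τ.eval_zero]
  coassoc b := by
    set F := (τ.restrictAlgHom hj hτ).toRingHom
    set J := mapRingHom (mapRingHom (j : R →+* L))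
    have hΔ : J.comp (eval₂RingHom (C.comp C) (X + C X)) =
        (eval₂RingHom (C.comp C) (X + C X)).comp (mapRingHom (j : R →+* L)) := by
      ext <;> simp [J]
    have key : J.comp ((mapRingHom F).comp F) =
        J.comp ((eval₂RingHom (C.comp C) (X + C X)).comp F) := by
      rw [← RingHom.comp_assoc, mapRingHom_comp, mapRingHom_comp_restrictAlgHom,
        ← mapRingHom_comp, RingHom.comp_assoc, mapRingHom_comp_restrictAlgHom,
        ← RingHom.comp_assoc, τ.coassoc_ringHom, ← RingHom.comp_assoc, hΔ, RingHom.comp_assoc,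
        RingHom.comp_assoc, mapRingHom_comp_restrictAlgHom]
    exact map_injective _ (map_injective _ hj) (RingHom.congr_fun key b)

theorem fixes_restrict_iff {b : R} : (τ.restrict hj hτ).Fixes b ↔ τ.Fixes (j b) := by
  rw [Fixes, Fixes, ← (map_injective (j : R →+* L) hj).eq_iff, map_C]
  exact Eq.congr_left (τ.map_restrictAlgHom_apply hj hτ b)

end Restriction

end

section

variable {L : Type*} [CommRing L] [Algebra k L]

theorem mem_lifts_of_adjoin_eq_top {A : Type*} [CommRing A] [Algebra A R]
    (τ : ExponentialMap k L) (j : R →+* L) {G : Set R} (hG : Algebra.adjoin A G = ⊤)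
    (hA : ∀ a, τ.Fixes (j (algebraMap A R a)))
    (hGτ : ∀ g ∈ G, τ.toAlgHom (j g) ∈ lifts j) (b : R) : τ.toAlgHom (j b) ∈ lifts j := by
  have hP : Subring.closure (Set.range (algebraMap A R) ∪ G) ≤
      (liftsRing j).comap (τ.toAlgHom.toRingHom.comp j) := by
    refine Subring.closure_le.2 (Set.union_subset ?_ fun g hg =>
      (lifts_iff_liftsRing j _).1 (hGτ g hg))
    rintro _ ⟨a, rfl⟩
    exact (lifts_iff_liftsRing j _).1 ((hA a).symm ▸ C_mem_lifts j _)
  rw [← Algebra.adjoin_eq_ring_closure, hG, Algebra.top_toSubring] at hP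
  exact (lifts_iff_liftsRing j _).2 (hP (Subring.mem_top b))

theorem exists_isInteger_coeff_mul_pow [Algebra R L] (M : Submonoid R) [IsLocalization M L]
    (δ : ExponentialMap k L) (G : Finset R) :
    ∃ s : M, ∀ g ∈ G, ∀ n, IsLocalization.IsInteger R
      ((δ.toAlgHom (algebraMap R L g)).coeff n * algebraMap R L s ^ n) := by
  classical
  obtain ⟨s, hs⟩ := IsLocalization.exist_integer_multiples_of_finset M
    (G.biUnion fun g => (δ.toAlgHom (algebraMap R L g)).coeffs)
  refine ⟨s, fun g hg n => ?_⟩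
  rcases n with _ | n
  · rw [coeff_zero_apply, pow_zero, mul_one]
    exact ⟨g, rfl⟩
  by_cases hc : (δ.toAlgHom (algebraMap R L g)).coeff (n + 1) = 0
  · rw [hc, zero_mul]
    exact IsLocalization.isInteger_zero
  have hsc := hs _ (Finset.mem_biUnion.2 ⟨g, hg, coeff_mem_coeffs hc⟩)
  rw [Algebra.smul_def] at hsc
  rw [pow_succ', ← mul_assoc, mul_comm _ (algebraMap R L s)]
  exact IsLocalization.isInteger_mul hsc ⟨s ^ n, map_pow _ _ _⟩

end

theorem fixes_algebraMap_of_mem_mlSet [Algebra k R] {A L : Type*} [CommRing A] [Algebra A R]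
    [Algebra.FiniteType A R] [CommRing L] [Algebra R L] [Algebra k L] [IsScalarTower k R L]
    (M : Submonoid R) (hM : M ≤ nonZeroDivisors R) [IsLocalization M L]
    (δ : ExponentialMap k L) (hA : ∀ a, δ.Fixes (algebraMap R L (algebraMap A R a)))
    (hMδ : ∀ s ∈ M, δ.Fixes (algebraMap R L s)) {m : R}
    (hm : m ∈ mlSet k (Set.range (algebraMap A R))) : δ.Fixes (algebraMap R L m) := by
  obtain ⟨G, hG⟩ := Algebra.FiniteType.out (R := A) (A := R)
  obtain ⟨s, hs⟩ := δ.exists_isInteger_coeff_mul_pow M G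
  have hu : IsUnit (algebraMap R L s) := IsLocalization.map_units L s
  set τ := δ.twist _ (hMδ s s.2)
  have hτA : ∀ a, τ.Fixes (algebraMap R L (algebraMap A R a)) := fun a =>
    (δ.fixes_twist_iff _ hu).2 (hA a)
  let j := IsScalarTower.toAlgHom k R L
  have hj : Function.Injective j := IsLocalization.injective L hM
  have hτ : ∀ b, τ.toAlgHom (j b) ∈ lifts (j : R →+* L) :=
    mem_lifts_of_adjoin_eq_top τ _ hG hτA fun g hg =>
      (lifts_iff_coeff_lifts _).2 fun n => by rw [coeff_twist]; exact hs g hg n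
  have hm' := hm (τ.restrict hj hτ) (by
    rintro _ ⟨a, rfl⟩
    exact (τ.fixes_restrict_iff hj hτ).2 (hτA a))
  exact (δ.fixes_twist_iff _ hu).1 ((τ.fixes_restrict_iff hj hτ).1 hm')

end ExponentialMap

section MakarLimanov

variable {k A B L : Type*} [CommRing k] [CommRing A] [CommRing B] [Algebra A B]
  {S : Submonoid A} [CommRing L] [Algebra B L] [Algebra k L]
  [IsLocalization (S.map (algebraMap A B)) L]

theorem ExponentialMap.fixes_of_mul_eq_algebraMap (δ : ExponentialMap k L)
    (hA : ∀ a, δ.Fixes (algebraMap B L (algebraMap A B a))) {x : L} {s : A} (hs : s ∈ S)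
    {b : B} (hb : δ.Fixes (algebraMap B L b))
    (hx : x * algebraMap B L (algebraMap A B s) = algebraMap B L b) : δ.Fixes x :=
  δ.fixes_of_mul_eq (hA s) hb
    (IsLocalization.map_units L (⟨_, Submonoid.mem_map_of_mem _ hs⟩ : S.map (algebraMap A B)))
    hx

variable [Algebra k B] [IsScalarTower k B L]

theorem exists_mem_mlSet_of_mem_mlSet_localization
    (hM : S.map (algebraMap A B) ≤ nonZeroDivisors B) {x : L}
    (hx : x ∈ mlSet k {x : L | ∃ a : A, ∃ s ∈ S,
      x * algebraMap B L (algebraMap A B s) = algebraMap B L (algebraMap A B a)}) :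
    ∃ m ∈ mlSet k (Set.range (algebraMap A B)), ∃ s ∈ S,
      x * algebraMap B L (algebraMap A B s) = algebraMap B L m := by
  obtain ⟨⟨m, _, s, hs, rfl⟩, hxm⟩ := IsLocalization.surj (S.map (algebraMap A B)) x
  refine ⟨m, fun δ hδ => ?_, s, hs, hxm⟩
  have hMδ : ∀ u ∈ S.map (algebraMap A B), δ.Fixes u := by
    rintro _ ⟨a, -, rfl⟩
    exact hδ _ ⟨a, rfl⟩
  have hA : ∀ a, (δ.localize _ L hMδ).Fixes (algebraMap B L (algebraMap A B a)) := fun a =>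
    (δ.fixes_localize_algebraMap_iff _ L hM hMδ).2 (hδ _ ⟨a, rfl⟩)
  have hxδ : (δ.localize _ L hMδ).Fixes x := hx _ (by
    rintro y ⟨a, s, hs, hy⟩
    exact ExponentialMap.fixes_of_mul_eq_algebraMap _ hA hs (hA a) hy)
  rw [← δ.fixes_localize_algebraMap_iff _ L hM hMδ, ← hxm]
  exact ExponentialMap.fixes_mul _ hxδ (hA s)

end MakarLimanov

theorem stmt_2_general {k A B : Type*} [Field k]
    [CommRing A]
    [CommRing B] [IsDomain B] [Algebra k B] [Algebra A B]
    [Algebra.FiniteType A B]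
    (hinj : Function.Injective (algebraMap A B))
    (S : Submonoid A) (hS : ∀ s ∈ S, (s : A) ≠ 0) :
    mlSet k
        {x : Localization (S.map (algebraMap A B)) |
          ∃ a : A, ∃ s ∈ S,
            x * algebraMap B (Localization (S.map (algebraMap A B))) (algebraMap A B s) =
              algebraMap B (Localization (S.map (algebraMap A B))) (algebraMap A B a)} =
      {x : Localization (S.map (algebraMap A B)) |
        ∃ m ∈ mlSet k (Set.range (algebraMap A B)), ∃ s ∈ S,
          x * algebraMap B (Localization (S.map (algebraMap A B))) (algebraMap A B s) =
            algebraMap B (Localization (S.map (algebraMap A B))) m} := by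
  have hM : S.map (algebraMap A B) ≤ nonZeroDivisors B :=
    le_nonZeroDivisors_of_noZeroDivisors fun ⟨s, hs, h⟩ =>
      hS s hs (hinj (h.trans (map_zero _).symm))
  ext x
  refine ⟨exists_mem_mlSet_of_mem_mlSet_localization hM, ?_⟩
  rintro ⟨m, hm, s, hs, hxm⟩ δ hδ
  have hA : ∀ a, δ.Fixes (algebraMap B _ (algebraMap A B a)) := fun a =>
    hδ _ ⟨a, 1, S.one_mem, by simp⟩
  refine δ.fixes_of_mul_eq_algebraMap hA hs ?_ hxm
  exact δ.fixes_algebraMap_of_mem_mlSet _ hM hA (by rintro _ ⟨a, -, rfl⟩; exact hA a) hm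

/-- Let `k` be a field, `A` an affine `k`-domain, `B` a domain that is
a finitely generated `A`-algebra with injective structure map, and `S` a multiplicatively
closed subset of `A \ {0}`.  Then `ML_{S⁻¹A}(S⁻¹B) = S⁻¹(ML_A(B))`: an element of the
localization `S⁻¹B` belongs to the Makar-Limanov invariant of `S⁻¹B` relative to the
subring `S⁻¹A` if and only if it is of the form `m/s` with `m ∈ ML_A(B)` and `s ∈ S`. -/
theorem stmt_2 {k A B : Type*} [Field k]
    [CommRing A] [IsDomain A] [Algebra k A] [Algebra.FiniteType k A]
    [CommRing B] [IsDomain B] [Algebra k B] [Algebra A B] [IsScalarTower k A B]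
    [Algebra.FiniteType A B]
    (hinj : Function.Injective (algebraMap A B))
    (S : Submonoid A) (hS : ∀ s ∈ S, (s : A) ≠ 0) :
    mlSet k
        {x : Localization (S.map (algebraMap A B)) |
          ∃ a : A, ∃ s ∈ S,
            x * algebraMap B (Localization (S.map (algebraMap A B))) (algebraMap A B s) =
              algebraMap B (Localization (S.map (algebraMap A B))) (algebraMap A B a)} =
      {x : Localization (S.map (algebraMap A B)) |
        ∃ m ∈ mlSet k (Set.range (algebraMap A B)), ∃ s ∈ S,
          x * algebraMap B (Localization (S.map (algebraMap A B))) (algebraMap A B s) =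
            algebraMap B (Localization (S.map (algebraMap A B))) m} :=
  stmt_2_general hinj S hS
end

section
/- Let k be a field, R a factorial affine k-domain with K = Frac(R). For i = 1, 2 let B_i := R[X,Y,Z,T]/(X^d·Y − P_i(X,Z), X^e·T − Q_i(X,Y,Z)) with d, e ≥ 1, P_i ∈ R[X,Z] with deg_Z P_1(0,Z) = deg_Z P_2(0,Z) > 1 and P_i monic in Z over K, and Q_i ∈ R[X,Y,Z] monic in Y over K with deg_Y Q_1 = deg_Y Q_2 ≥ 1. Suppose there exist units λ₁, μ₁, β̃₁, g₂′ of R, δ₁(X) ∈ R[X], α̃₁(X,Z) ∈ R[X,Z], and g₁′, g₃′ ∈ R[X,Y,Z] such that P_2(λ₁X, μ₁Z + δ₁(X)) = λ₁^d·β̃₁·P_1(X,Z) + X^d·λ₁^d·α̃₁(X,Z) and Q_2(λ₁X, β̃₁Y + α̃₁(X,Z), μ₁Z + δ₁(X)) = X^e·g₁′ + g₂′·Q_1(X,Y,Z) + (X^d·Y − P_1(X,Z))·g₃′. Then B_1 and B_2 are isomorphic as R-algebras. -/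
/-- The defining ideal of the Double Danielewski type algebra
`B_{d,e}^R = R[X,Y,Z,T]/(X^d·Y − P(X,Z), X^e·T − Q(X,Y,Z))`.
Variables of `Fin 4`: `0 = X`, `1 = Y`, `2 = Z`, `3 = T`. -/
noncomputable def ddIdeal (R : Type*) [CommRing R] (d e : ℕ)
    (P : MvPolynomial (Fin 2) R) (Q : MvPolynomial (Fin 3) R) :
    Ideal (MvPolynomial (Fin 4) R) :=
  Ideal.span
    { MvPolynomial.X 0 ^ d * MvPolynomial.X 1 -
        MvPolynomial.rename (![0, 2] : Fin 2 → Fin 4) P,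
      MvPolynomial.X 0 ^ e * MvPolynomial.X 3 -
        MvPolynomial.rename (![0, 1, 2] : Fin 3 → Fin 4) Q }

/-- For `P = P(X,Z) ∈ R[X,Z]`, the polynomial `P(0,Z) ∈ R[Z]`. -/
noncomputable def subZeroP {R : Type*} [CommRing R] (P : MvPolynomial (Fin 2) R) :
    Polynomial R :=
  MvPolynomial.aeval ![0, Polynomial.X] P

/-- `P(X,Z)` viewed as a polynomial in `Z` with coefficients in `R[X]`. -/
noncomputable def asPolyZ {R : Type*} [CommRing R] (P : MvPolynomial (Fin 2) R) :
    Polynomial (Polynomial R) :=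
  MvPolynomial.aeval ![Polynomial.C Polynomial.X, Polynomial.X] P

/-- `Q(X,Y,Z)` viewed as a polynomial in `Y` with coefficients in `R[X,Z]`
(variables of the coefficient ring: `0 = X`, `1 = Z`). -/
noncomputable def asPolyY {R : Type*} [CommRing R] (Q : MvPolynomial (Fin 3) R) :
    Polynomial (MvPolynomial (Fin 2) R) :=
  MvPolynomial.aeval
    ![Polynomial.C (MvPolynomial.X 0), Polynomial.X, Polynomial.C (MvPolynomial.X 1)] Q

/-!
The substitution `σ : X ↦ λ₁X, Y ↦ β̃₁Y + α̃₁(X,Z), Z ↦ μ₁Z + δ₁(X), T ↦ λ₁⁻ᵉ(g₁′ + g₂′T)` is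
triangular with unit diagonal coefficients, hence an `R`-automorphism of `R[X,Y,Z,T]`. The two
hypotheses say exactly that `σ(X^d·Y − P₂) = λ₁^d·β̃₁·(X^d·Y − P₁)` and
`σ(X^e·T − Q₂) = g₂′·(X^e·T − Q₁) − g₃′·(X^d·Y − P₁)`, so `σ` carries the defining ideal of `B₂`
onto that of `B₁`.
-/

namespace Matrix

@[simp]
theorem comp_vecCons {α β : Type*} {n : ℕ} (f : α → β) (a : α) (v : Fin n → α) :
    f ∘ vecCons a v = vecCons (f a) (f ∘ v) :=
  Fin.comp_cons _ _ _

@[simp]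
theorem comp_vecEmpty {α β : Type*} (f : α → β) : f ∘ (![] : Fin 0 → α) = ![] :=
  Subsingleton.elim _ _

end Matrix

theorem Ideal.span_pair_isUnit_mul {S : Type*} [CommRing S] {u v : S} (hu : IsUnit u)
    (hv : IsUnit v) (a b c : S) :
    Ideal.span {u * a, v * b + c * a} = Ideal.span {a, b} := by
  have : v * b + c * a = v * b + (c * ↑hu.unit⁻¹) * (u * a) := by
    rw [mul_assoc, ← mul_assoc _ u, IsUnit.val_inv_mul, one_mul]
  rw [this, Ideal.span_pair_add_mul_left, Ideal.span_insert, Ideal.span_insert,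
    Ideal.span_singleton_mul_left_unit hu, Ideal.span_singleton_mul_left_unit hv]

namespace MvPolynomial

variable {R : Type*} [CommRing R]

theorem algHom_aeval {σ A B : Type*} [CommRing A] [CommRing B] [Algebra R A] [Algebra R B]
    (φ : A →ₐ[R] B) (v : σ → A) (p : MvPolynomial σ R) : φ (aeval v p) = aeval (φ ∘ v) p :=
  comp_aeval_apply (f := v) φ p

section Triangular

variable (a b c w : Rˣ) (δ : Polynomial R) (α : MvPolynomial (Fin 2) R)
  (γ : MvPolynomial (Fin 3) R)

noncomputable def triangularHom : MvPolynomial (Fin 4) R →ₐ[R] MvPolynomial (Fin 4) R :=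
  aeval ![C (a : R) * X 0, C (c : R) * X 1 + rename ![0, 2] α,
    C (b : R) * X 2 + Polynomial.aeval (X 0) δ, C (w : R) * X 3 + rename ![0, 1, 2] γ]

/-- Solving the triangular system for `X`, `Z`, `Y`, `T` in turn. -/
noncomputable def triangularHomInv : MvPolynomial (Fin 4) R →ₐ[R] MvPolynomial (Fin 4) R :=
  let x := C (a⁻¹ : Rˣ).val * X 0
  let z := C (b⁻¹ : Rˣ).val * (X 2 - Polynomial.aeval x δ)
  let y := C (c⁻¹ : Rˣ).val * (X 1 - aeval ![x, z] α)
  aeval ![x, y, z, C (w⁻¹ : Rˣ).val * (X 3 - aeval ![x, y, z] γ)]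

theorem triangularHomInv_comp_triangularHom :
    (triangularHomInv a b c w δ α γ).comp (triangularHom a b c w δ α γ) = AlgHom.id R _ := by
  apply algHom_ext
  intro i
  fin_cases i <;>
    simp [triangularHom, triangularHomInv, -aeval_eq_bind₁, rename_eq_aeval, algHom_aeval,
      ← mul_assoc, ← C_mul, ← Polynomial.aeval_algHom_apply]

theorem triangularHom_comp_triangularHomInv :
    (triangularHom a b c w δ α γ).comp (triangularHomInv a b c w δ α γ) = AlgHom.id R _ := by
  apply algHom_ext
  intro i
  fin_cases i <;>
    simp [triangularHom, triangularHomInv, -aeval_eq_bind₁, rename_eq_aeval, algHom_aeval,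
      ← mul_assoc, ← C_mul, ← Polynomial.aeval_algHom_apply]

@[simp]
theorem triangularHom_X_zero : triangularHom a b c w δ α γ (X 0) = C (a : R) * X 0 :=
  aeval_X _ _

@[simp]
theorem triangularHom_X_one :
    triangularHom a b c w δ α γ (X 1) = C (c : R) * X 1 + rename ![0, 2] α :=
  aeval_X _ _

@[simp]
theorem triangularHom_X_three :
    triangularHom a b c w δ α γ (X 3) = C (w : R) * X 3 + rename ![0, 1, 2] γ :=
  aeval_X _ _

noncomputable def triangularEquiv : MvPolynomial (Fin 4) R ≃ₐ[R] MvPolynomial (Fin 4) R :=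
  AlgEquiv.ofAlgHom (triangularHom a b c w δ α γ) (triangularHomInv a b c w δ α γ)
    (triangularHom_comp_triangularHomInv a b c w δ α γ)
    (triangularHomInv_comp_triangularHom a b c w δ α γ)

@[simp]
theorem triangularEquiv_apply (p : MvPolynomial (Fin 4) R) :
    triangularEquiv a b c w δ α γ p = triangularHom a b c w δ α γ p :=
  rfl

theorem triangularHom_rename_XZ (p : MvPolynomial (Fin 2) R) :
    triangularHom a b c w δ α γ (rename ![0, 2] p) =
      rename ![0, 2] (aeval ![C (a : R) * X 0, C (b : R) * X 1 + Polynomial.aeval (X 0) δ] p) := by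
  simp [triangularHom, -aeval_eq_bind₁, rename_eq_aeval, algHom_aeval,
    ← Polynomial.aeval_algHom_apply]

theorem triangularHom_rename_XYZ (q : MvPolynomial (Fin 3) R) :
    triangularHom a b c w δ α γ (rename ![0, 1, 2] q) =
      rename ![0, 1, 2] (aeval ![C (a : R) * X 0, C (c : R) * X 1 + rename ![0, 2] α,
        C (b : R) * X 2 + Polynomial.aeval (X 0) δ] q) := by
  simp [triangularHom, -aeval_eq_bind₁, rename_eq_aeval, algHom_aeval,
    ← Polynomial.aeval_algHom_apply]

end Triangular

end MvPolynomial

open MvPolynomial in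
theorem ddIdeal_eq_map_triangularEquiv {R : Type*} [CommRing R] (d e : ℕ)
    (P₁ P₂ : MvPolynomial (Fin 2) R) (Q₁ Q₂ : MvPolynomial (Fin 3) R)
    (lam mu beta g : Rˣ) (delta : Polynomial R) (alpha : MvPolynomial (Fin 2) R)
    (g₁ g₃ : MvPolynomial (Fin 3) R)
    (hP : aeval ![C (lam : R) * X 0, C (mu : R) * X 1 + Polynomial.aeval (X 0) delta] P₂ =
      C ((lam : R) ^ d * (beta : R)) * P₁ + X 0 ^ d * C ((lam : R) ^ d) * alpha)
    (hQ : aeval ![C (lam : R) * X 0, C (beta : R) * X 1 + rename ![0, 2] alpha,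
        C (mu : R) * X 2 + Polynomial.aeval (X 0) delta] Q₂ =
      X 0 ^ e * g₁ + C (g : R) * Q₁ + (X 0 ^ d * X 1 - rename ![0, 2] P₁) * g₃) :
    ddIdeal R d e P₁ Q₁ = (ddIdeal R d e P₂ Q₂).map
      (triangularEquiv lam mu beta (lam⁻¹ ^ e * g) delta alpha (C (lam⁻¹ ^ e : Rˣ).val * g₁)) := by
  set σ := triangularEquiv lam mu beta (lam⁻¹ ^ e * g) delta alpha (C (lam⁻¹ ^ e : Rˣ).val * g₁)
  have hYP : σ (X 0 ^ d * X 1 - rename ![0, 2] P₂) =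
      C ((lam : R) ^ d * (beta : R)) * (X 0 ^ d * X 1 - rename ![0, 2] P₁) := by
    rw [triangularEquiv_apply, map_sub, map_mul, map_pow, triangularHom_X_zero,
      triangularHom_X_one, triangularHom_rename_XZ, hP]
    simp only [map_add, map_mul, map_pow, rename_C, rename_X, Fin.isValue, Matrix.cons_val_zero]
    ring
  have hTQ : σ (X 0 ^ e * X 3 - rename ![0, 1, 2] Q₂) =
      C (g : R) * (X 0 ^ e * X 3 - rename ![0, 1, 2] Q₁) +
        (-rename ![0, 1, 2] g₃) * (X 0 ^ d * X 1 - rename ![0, 2] P₁) := by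
    rw [triangularEquiv_apply, map_sub, map_mul, map_pow, triangularHom_X_zero,
      triangularHom_X_three, triangularHom_rename_XYZ, hQ]
    have hlam : (C (lam : R) : MvPolynomial (Fin 4) R) ^ e * C (lam⁻¹ : Rˣ).val ^ e = 1 := by
      rw [← mul_pow, ← C_mul, Units.mul_inv, C_1, one_pow]
    simp only [map_add, map_mul, map_sub, map_pow, rename_C, rename_X, rename_rename,
      Units.val_mul, Units.val_pow_eq_pow_val, Fin.isValue, Matrix.comp_vecCons,
      Matrix.comp_vecEmpty, Matrix.cons_val]
    linear_combination X 0 ^ e * (C (g : R) * X 3 + rename ![0, 1, 2] g₁) * hlam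
  simp only [ddIdeal, Ideal.map_span, Set.image_insert_eq, Set.image_singleton]
  rw [hYP, hTQ,
    Ideal.span_pair_isUnit_mul (((lam.isUnit.pow d).mul beta.isUnit).map C) (g.isUnit.map C)]

theorem stmt_8_general {R : Type*} [CommRing R]
    (d e : ℕ)
    (P₁ P₂ : MvPolynomial (Fin 2) R) (Q₁ Q₂ : MvPolynomial (Fin 3) R)
    (lam₁ mu₁ beta₁ g₂' : Rˣ) (delta₁ : Polynomial R) (alpha₁ : MvPolynomial (Fin 2) R)
    (g₁' g₃' : MvPolynomial (Fin 3) R)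
    (hP : MvPolynomial.aeval
        ![MvPolynomial.C (lam₁ : R) * MvPolynomial.X 0,
          MvPolynomial.C (mu₁ : R) * MvPolynomial.X 1 +
            Polynomial.aeval (MvPolynomial.X 0) delta₁] P₂ =
      MvPolynomial.C ((lam₁ : R) ^ d * (beta₁ : R)) * P₁ +
        MvPolynomial.X 0 ^ d * MvPolynomial.C ((lam₁ : R) ^ d) * alpha₁)
    (hQ : MvPolynomial.aeval
        ![MvPolynomial.C (lam₁ : R) * MvPolynomial.X 0,
          MvPolynomial.C (beta₁ : R) * MvPolynomial.X 1 +
            MvPolynomial.rename (![0, 2] : Fin 2 → Fin 3) alpha₁,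
          MvPolynomial.C (mu₁ : R) * MvPolynomial.X 2 +
            Polynomial.aeval (MvPolynomial.X 0) delta₁] Q₂ =
      MvPolynomial.X 0 ^ e * g₁' + MvPolynomial.C ((g₂' : R)) * Q₁ +
        (MvPolynomial.X 0 ^ d * MvPolynomial.X 1 -
          MvPolynomial.rename (![0, 2] : Fin 2 → Fin 3) P₁) * g₃') :
    Nonempty ((MvPolynomial (Fin 4) R ⧸ ddIdeal R d e P₁ Q₁) ≃ₐ[R]
      (MvPolynomial (Fin 4) R ⧸ ddIdeal R d e P₂ Q₂)) :=
  ⟨(Ideal.quotientEquivAlg _ _ _ (ddIdeal_eq_map_triangularEquiv d e P₁ P₂ Q₁ Q₂ lam₁ mu₁ beta₁ g₂'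
    delta₁ alpha₁ g₁' g₃' hP hQ)).symm⟩

/-- (Converse direction.)  Let `k` be a field and `R` a factorial
affine `k`-domain.  For `i = 1, 2` let
`Bᵢ = R[X,Y,Z,T]/(X^d·Y − Pᵢ(X,Z), X^e·T − Qᵢ(X,Y,Z))` with `d, e ≥ 1`,
`deg_Z P₁(0,Z) = deg_Z P₂(0,Z) > 1`, `Pᵢ` monic in `Z` over `K = Frac R`, and `Qᵢ`
monic in `Y` over `K` with `deg_Y Q₁ = deg_Y Q₂ ≥ 1`.  Suppose there exist units
`λ₁, μ₁, β̃₁, g₂′` of `R`, polynomials `δ₁(X) ∈ R[X]`, `α̃₁(X,Z) ∈ R[X,Z]` and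
`g₁′, g₃′ ∈ R[X,Y,Z]` with
`P₂(λ₁X, μ₁Z + δ₁(X)) = λ₁^d·β̃₁·P₁(X,Z) + X^d·λ₁^d·α̃₁(X,Z)` and
`Q₂(λ₁X, β̃₁Y + α̃₁(X,Z), μ₁Z + δ₁(X)) = X^e·g₁′ + g₂′·Q₁ + (X^d·Y − P₁(X,Z))·g₃′`.
Then `B₁ ≅ B₂` as `R`-algebras. -/
theorem stmt_8 {k R : Type*} [Field k] [CommRing R] [IsDomain R] [Algebra k R]
    [Algebra.FiniteType k R] [UniqueFactorizationMonoid R]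
    (d e : ℕ) (hd : 1 ≤ d) (he : 1 ≤ e)
    (P₁ P₂ : MvPolynomial (Fin 2) R) (Q₁ Q₂ : MvPolynomial (Fin 3) R)
    (hr₁ : 1 < (subZeroP P₁).natDegree)
    (hr : (subZeroP P₁).natDegree = (subZeroP P₂).natDegree)
    (hPmonic₁ : ∃ c : R, c ≠ 0 ∧ (asPolyZ P₁).leadingCoeff = Polynomial.C c)
    (hPmonic₂ : ∃ c : R, c ≠ 0 ∧ (asPolyZ P₂).leadingCoeff = Polynomial.C c)
    (hQmonic₁ : ∃ c : R, c ≠ 0 ∧ (asPolyY Q₁).leadingCoeff = MvPolynomial.C c)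
    (hQmonic₂ : ∃ c : R, c ≠ 0 ∧ (asPolyY Q₂).leadingCoeff = MvPolynomial.C c)
    (hs : (asPolyY Q₁).natDegree = (asPolyY Q₂).natDegree)
    (hs₁ : 1 ≤ (asPolyY Q₁).natDegree)
    (lam₁ mu₁ beta₁ g₂' : Rˣ) (delta₁ : Polynomial R) (alpha₁ : MvPolynomial (Fin 2) R)
    (g₁' g₃' : MvPolynomial (Fin 3) R)
    (hP : MvPolynomial.aeval
        ![MvPolynomial.C (lam₁ : R) * MvPolynomial.X 0,
          MvPolynomial.C (mu₁ : R) * MvPolynomial.X 1 +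
            Polynomial.aeval (MvPolynomial.X 0) delta₁] P₂ =
      MvPolynomial.C ((lam₁ : R) ^ d * (beta₁ : R)) * P₁ +
        MvPolynomial.X 0 ^ d * MvPolynomial.C ((lam₁ : R) ^ d) * alpha₁)
    (hQ : MvPolynomial.aeval
        ![MvPolynomial.C (lam₁ : R) * MvPolynomial.X 0,
          MvPolynomial.C (beta₁ : R) * MvPolynomial.X 1 +
            MvPolynomial.rename (![0, 2] : Fin 2 → Fin 3) alpha₁,
          MvPolynomial.C (mu₁ : R) * MvPolynomial.X 2 +
            Polynomial.aeval (MvPolynomial.X 0) delta₁] Q₂ =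
      MvPolynomial.X 0 ^ e * g₁' + MvPolynomial.C ((g₂' : R)) * Q₁ +
        (MvPolynomial.X 0 ^ d * MvPolynomial.X 1 -
          MvPolynomial.rename (![0, 2] : Fin 2 → Fin 3) P₁) * g₃') :
    Nonempty ((MvPolynomial (Fin 4) R ⧸ ddIdeal R d e P₁ Q₁) ≃ₐ[R]
      (MvPolynomial (Fin 4) R ⧸ ddIdeal R d e P₂ Q₂)) :=
  stmt_8_general d e P₁ P₂ Q₁ Q₂ lam₁ mu₁ beta₁ g₂' delta₁ alpha₁ g₁' g₃' hP hQ
end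

section
/- Let k be a field, R a factorial affine k-domain, and B an affine R-domain generated over R by elements x, y, z ∈ B. Suppose that x and z are algebraically independent over R and that x^m·y = F(x,z) in B, where m ≥ 1 and F(X,Z) ∈ R[X,Z] is such that F(0,Z) ∈ R[Z] \ R (i.e., substituting X = 0 in F gives a nonconstant polynomial in Z over R). Then B is isomorphic as an R-algebra to R[X,Y,Z]/(X^m·Y − F(X,Z)). -/
namespace Polynomial

theorem isPrimitive_C_mul_X_sub_C {A : Type*} [CommRing A] {c a : A} (h : IsRelPrime c a) :
    (C c * X - C a).IsPrimitive := by
  intro r hr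
  rw [C_dvd_iff_dvd_coeff] at hr
  refine h ?_ ?_
  · simpa using hr 1
  · simpa using hr 0

variable {A B : Type*} [CommRing A] [IsDomain A] [IsGCDMonoid A] [CommRing B] [IsDomain B]
  {φ : A →+* B} {c a : A} {y : B}

theorem C_mul_X_sub_C_dvd_of_eval₂_eq_zero (hφ : Function.Injective φ) (hc : c ≠ 0)
    (hca : IsRelPrime c a) (hy : φ c * y = φ a) {q : A[X]} (hq : q.eval₂ φ y = 0) :
    C c * X - C a ∣ q := by
  have hinj : Function.Injective ((algebraMap B (FractionRing B)).comp φ) :=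
    (IsFractionRing.injective B (FractionRing B)).comp hφ
  obtain ⟨ℓ, hℓ⟩ : ∃ ℓ : FractionRing A →+* FractionRing B,
      ℓ.comp (algebraMap A _) = (algebraMap B _).comp φ :=
    ⟨IsFractionRing.lift hinj, IsLocalization.lift_comp _⟩
  set ι := algebraMap A (FractionRing A)
  have hcK : ι c ≠ 0 := (map_ne_zero_iff _ (IsFractionRing.injective A _)).mpr hc
  have hα : ℓ (ι a / ι c) = algebraMap B (FractionRing B) y := by
    have hφc : ℓ (ι c) ≠ 0 := (map_ne_zero_iff _ ℓ.injective).mpr hcK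
    rw [map_div₀, div_eq_iff hφc, ← RingHom.comp_apply, ← RingHom.comp_apply, hℓ]
    simp [← hy, mul_comm]
  have hroot : (q.map ι).IsRoot (ι a / ι c) := by
    apply ℓ.injective
    rw [eval_map, hom_eval₂, hα, hℓ, ← hom_eval₂, hq, map_zero, map_zero]
  have hmap : (C c * X - C a).map ι = C (ι c) * (X - C (ι a / ι c)) := by
    rw [mul_sub, ← C_mul, mul_div_cancel₀ _ hcK]
    simp
  refine (isPrimitive_C_mul_X_sub_C hca).dvd_of_fraction_map_dvd_fraction_map
    (K := FractionRing A) ?_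
  rw [hmap]
  exact (IsUnit.mul_left_dvd (isUnit_C.mpr hcK.isUnit)).mpr (dvd_iff_isRoot.mpr hroot)

theorem ker_eval₂RingHom_eq_span_C_mul_X_sub_C (hφ : Function.Injective φ) (hc : c ≠ 0)
    (hca : IsRelPrime c a) (hy : φ c * y = φ a) :
    RingHom.ker (eval₂RingHom φ y) = Ideal.span {C c * X - C a} := by
  ext q
  rw [RingHom.mem_ker, Ideal.mem_span_singleton, coe_eval₂RingHom]
  refine ⟨C_mul_X_sub_C_dvd_of_eval₂_eq_zero hφ hc hca hy, ?_⟩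
  rintro ⟨s, rfl⟩
  simp [hy]

end Polynomial

namespace MvPolynomial

variable (R : Type*) [CommRing R] {n : ℕ}

noncomputable def finSuccEquivAt (i : Fin (n + 1)) :
    MvPolynomial (Fin (n + 1)) R ≃ₐ[R] Polynomial (MvPolynomial (Fin n) R) :=
  (renameEquiv R (finSuccEquiv' i)).trans (optionEquivLeft R (Fin n))

variable {R}

theorem finSuccEquivAt_X_self (i : Fin (n + 1)) : finSuccEquivAt R i (X i) = Polynomial.X := by
  simp [finSuccEquivAt, optionEquivLeft_X_none]

theorem finSuccEquivAt_rename_succAbove (i : Fin (n + 1)) (q : MvPolynomial (Fin n) R) :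
    finSuccEquivAt R i (rename i.succAbove q) = Polynomial.C q := by
  induction q using MvPolynomial.induction_on with
  | C r => simp [finSuccEquivAt, optionEquivLeft_C]
  | add p q hp hq => simp_all
  | mul_X p j hp => simp_all [finSuccEquivAt, finSuccEquiv'_succAbove, optionEquivLeft_X_some]

theorem finSuccEquivAt_X_succAbove (i : Fin (n + 1)) (j : Fin n) :
    finSuccEquivAt R i (X (i.succAbove j)) = Polynomial.C (X j) := by
  simpa using finSuccEquivAt_rename_succAbove i (X j (R := R))

theorem eval₂_finSuccEquivAt {B : Type*} [CommRing B] [Algebra R B] (x : Fin (n + 1) → B)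
    (i : Fin (n + 1)) (p : MvPolynomial (Fin (n + 1)) R) :
    (finSuccEquivAt R i p).eval₂ (aeval (x ∘ i.succAbove)).toRingHom (x i) = aeval x p := by
  suffices h : (Polynomial.eval₂RingHom (aeval (x ∘ i.succAbove)).toRingHom (x i)).comp
      (finSuccEquivAt R i).toRingHom = (aeval x).toRingHom from RingHom.congr_fun h p
  refine ringHom_ext (fun r => ?_) (Fin.succAboveCases i ?_ fun j => ?_)
  · simp [finSuccEquivAt, optionEquivLeft_C]
  · simp [finSuccEquivAt_X_self]
  · simp [finSuccEquivAt_X_succAbove]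

theorem ker_aeval_eq_span_rename_mul_X_sub_rename [IsDomain R] [UniqueFactorizationMonoid R]
    {B : Type*} [CommRing B] [IsDomain B] [Algebra R B] {x : Fin (n + 1) → B} (i : Fin (n + 1))
    (hind : AlgebraicIndependent R (x ∘ i.succAbove)) {c a : MvPolynomial (Fin n) R}
    (hc : c ≠ 0) (hca : IsRelPrime c a)
    (hrel : aeval (x ∘ i.succAbove) c * x i = aeval (x ∘ i.succAbove) a) :
    RingHom.ker (aeval x) = Ideal.span {rename i.succAbove c * X i - rename i.succAbove a} := by
  ext p
  rw [RingHom.mem_ker, Ideal.mem_span_singleton, ← eval₂_finSuccEquivAt _ i,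
    ← Polynomial.coe_eval₂RingHom, ← RingHom.mem_ker,
    Polynomial.ker_eval₂RingHom_eq_span_C_mul_X_sub_C hind hc hca hrel,
    Ideal.mem_span_singleton, ← map_dvd_iff (finSuccEquivAt R i), map_sub, map_mul,
    finSuccEquivAt_rename_succAbove, finSuccEquivAt_rename_succAbove, finSuccEquivAt_X_self]

end MvPolynomial

open MvPolynomial

theorem subZeroP_eq_zero_of_X_zero_dvd {R : Type*} [CommRing R] {P : MvPolynomial (Fin 2) R}
    (h : X 0 ∣ P) : subZeroP P = 0 := by
  obtain ⟨Q, rfl⟩ := h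
  simp [subZeroP]

theorem stmt_11_general {R B : Type*} [CommRing R] [IsDomain R] [UniqueFactorizationMonoid R]
    [CommRing B] [IsDomain B] [Algebra R B]
    (x y z : B) (hgen : Algebra.adjoin R ({x, y, z} : Set B) = ⊤)
    (hind : AlgebraicIndependent R ![x, z])
    (m : ℕ) (F : MvPolynomial (Fin 2) R)
    (hrel : x ^ m * y = MvPolynomial.aeval ![x, z] F)
    (hF : 1 ≤ (subZeroP F).natDegree) :
    Nonempty (B ≃ₐ[R] (MvPolynomial (Fin 3) R ⧸
      Ideal.span
        ({MvPolynomial.X 0 ^ m * MvPolynomial.X 1 -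
          MvPolynomial.rename (![0, 2] : Fin 2 → Fin 3) F} :
          Set (MvPolynomial (Fin 3) R)))) := by
  have hXF : ¬ X 0 ∣ F := fun h => by simp [subZeroP_eq_zero_of_X_zero_dvd h] at hF
  have hca : IsRelPrime (X 0 ^ m) F :=
    (X_prime.irreducible.isRelPrime_iff_not_dvd.mpr hXF).pow_left
  have hsucc : (![0, 2] : Fin 2 → Fin 3) = Fin.succAbove 1 := by ext i; fin_cases i <;> rfl
  have hxz : ![x, y, z] ∘ Fin.succAbove 1 = ![x, z] := by ext i; fin_cases i <;> rfl
  have hker : RingHom.ker (aeval ![x, y, z]) =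
      Ideal.span {X 0 ^ m * X 1 - rename (![0, 2] : Fin 2 → Fin 3) F} := by
    rw [hsucc, ker_aeval_eq_span_rename_mul_X_sub_rename 1 (hxz ▸ hind)
      (pow_ne_zero m (X_ne_zero 0)) hca (by simpa [hxz] using hrel)]
    simp
  have hsurj : Function.Surjective (aeval (R := R) ![x, y, z]) := by
    rw [← AlgHom.range_eq_top, aeval_range, ← hgen]
    congr 1
    ext; simp [or_comm, or_left_comm]
  exact ⟨(Ideal.quotientKerAlgEquivOfSurjective hsurj).symm.trans
    (Ideal.quotientEquivAlgOfEq R hker)⟩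

/-- Let `k` be a field, `R` a factorial affine `k`-domain and `B`
an affine `R`-domain generated over `R` by elements `x, y, z ∈ B`.  Suppose `x` and `z`
are algebraically independent over `R` and `x^m·y = F(x,z)` in `B`, where `m ≥ 1` and
`F(X,Z) ∈ R[X,Z]` is such that `F(0,Z) ∈ R[Z] \ R` (a nonconstant polynomial in `Z`).
Then `B ≅ R[X,Y,Z]/(X^m·Y − F(X,Z))` as `R`-algebras
(variables of `Fin 3`: `0 = X`, `1 = Y`, `2 = Z`). -/
theorem stmt_11 {k R B : Type*} [Field k] [CommRing R] [IsDomain R] [Algebra k R]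
    [Algebra.FiniteType k R] [UniqueFactorizationMonoid R]
    [CommRing B] [IsDomain B] [Algebra R B]
    (x y z : B) (hgen : Algebra.adjoin R ({x, y, z} : Set B) = ⊤)
    (hind : AlgebraicIndependent R ![x, z])
    (m : ℕ) (hm : 1 ≤ m) (F : MvPolynomial (Fin 2) R)
    (hrel : x ^ m * y = MvPolynomial.aeval ![x, z] F)
    (hF : 1 ≤ (subZeroP F).natDegree) :
    Nonempty (B ≃ₐ[R] (MvPolynomial (Fin 3) R ⧸
      Ideal.span
        ({MvPolynomial.X 0 ^ m * MvPolynomial.X 1 -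
          MvPolynomial.rename (![0, 2] : Fin 2 → Fin 3) F} :
          Set (MvPolynomial (Fin 3) R)))) :=
  stmt_11_general x y z hgen hind m F hrel hF
end

section
/- Let k be a field of characteristic zero, R a factorial affine k-domain, and B a factorial affine R-domain. Suppose there exists a non-trivial locally nilpotent k-derivation D on B such that: (i) ker D = R[x], the R-subalgebra generated by an element x ∈ B that is transcendental over R; and (ii) there exists z ∈ B \ xB with D(z) = x^m for some integer m ≥ 1. If B ≠ R[x,z], then R[z] ∩ xB = φ(z)·R[z], where φ(z) is an irreducible element of the polynomial ring R[z] with deg_z φ(z) ≥ 1. -/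
/-!
The kernel `R[x] ≅ R[X]` of a locally nilpotent derivation is factorially closed, so `x` stays
prime in `B` and `R ∩ xB = 0`. Hence `I = R[z] ∩ xB` is a prime ideal of `R[z]` meeting `R`
trivially. It is nonzero: since `D z = x ^ m` lies in the kernel, every `b ∈ B` has
`x ^ N * b ∈ R[x, z]` for some `N` (antiderivatives in `z` lift `D`-nilpotency one step at a
time), and if `I = 0` one may divide by `x` inside `R[x, z]`, giving `B = R[x, z]`. Finally a
nonzero prime of `R[z]` with `I ∩ R = 0` is generated by any prime `φ ∈ I`: for `p ∈ I` the
resultant of `φ` and `p` lies in `I ∩ R = 0`, so `φ` and `p` share a factor over `Frac R`, and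
Gauss's lemma gives `φ ∣ p`.
-/

open Polynomial Finset Algebra

def IsFactoriallyClosed {B : Type*} [MonoidWithZero B] (S : Set B) : Prop :=
  ∀ ⦃a b : B⦄, a ≠ 0 → b ≠ 0 → a * b ∈ S → a ∈ S

section FactoriallyClosedRange

variable {A B F : Type*} [CommMonoidWithZero A] [CommMonoidWithZero B] [FunLike F A B]
  [MonoidWithZeroHomClass F A B] {f : F}

theorem IsFactoriallyClosed.dvd_of_map_dvd_map (hS : IsFactoriallyClosed (Set.range f))
    (hf : Function.Injective f) {p q : A} (h : f p ∣ f q) : p ∣ q := by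
  obtain ⟨c, hc⟩ := h
  by_cases hq : f q = 0
  · rw [(map_eq_zero_iff f hf).mp hq]
    exact dvd_zero p
  obtain ⟨c', rfl⟩ : c ∈ Set.range f :=
    hS (right_ne_zero_of_mul (hc ▸ hq)) (left_ne_zero_of_mul (hc ▸ hq))
      (mul_comm (f p) c ▸ hc ▸ Set.mem_range_self q)
  exact ⟨c', hf (by rw [hc, map_mul])⟩

theorem IsFactoriallyClosed.irreducible_map (hS : IsFactoriallyClosed (Set.range f))
    (hf : Function.Injective f) {p : A} (hp : Irreducible p) : Irreducible (f p) := by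
  refine ⟨fun hu ↦ hp.not_isUnit ?_, fun a b hab ↦ ?_⟩
  · rw [isUnit_iff_dvd_one] at hu ⊢
    exact hS.dvd_of_map_dvd_map hf (by rwa [map_one])
  have hab0 : a * b ≠ 0 := hab ▸ (map_ne_zero_iff f hf).mpr hp.ne_zero
  obtain ⟨a', rfl⟩ : a ∈ Set.range f :=
    hS (left_ne_zero_of_mul hab0) (right_ne_zero_of_mul hab0) (hab ▸ Set.mem_range_self p)
  obtain ⟨b', rfl⟩ : b ∈ Set.range f :=
    hS (right_ne_zero_of_mul hab0) (left_ne_zero_of_mul hab0)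
      (mul_comm (f a') _ ▸ hab ▸ Set.mem_range_self p)
  rw [← map_mul] at hab
  exact (hp.isUnit_or_isUnit (hf hab)).imp (IsUnit.map f) (IsUnit.map f)

end FactoriallyClosedRange

theorem Function.exists_iterate_ne_zero_iterate_succ_eq_zero {M : Type*} [Zero M] {f : M → M}
    {a : M} (ha : a ≠ 0) {n : ℕ} (hn : f^[n] a = 0) :
    ∃ p, f^[p] a ≠ 0 ∧ f^[p + 1] a = 0 := by
  induction n generalizing a with
  | zero => exact absurd hn ha
  | succ n ih =>
    by_cases hfa : f a = 0
    · exact ⟨0, ha, hfa⟩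
    · obtain ⟨p, hp⟩ := ih hfa hn
      exact ⟨p + 1, hp⟩

namespace Derivation

variable {R B : Type*} [CommSemiring R] [CommRing B] [Algebra R B] (D : Derivation R B B)

theorem iterate_apply_mul (n : ℕ) (a b : B) :
    D^[n] (a * b) = ∑ ij ∈ antidiagonal n, n.choose ij.1 • (D^[ij.1] a * D^[ij.2] b) := by
  induction n with
  | zero => simp
  | succ n ih =>
    rw [sum_antidiagonal_choose_succ_nsmul (M := B) (fun i j ↦ D^[i] a * D^[j] b) n]
    simp only [Function.iterate_succ_apply', ih, map_sum, map_nsmul, leibniz, smul_eq_mul,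
      smul_add, sum_add_distrib]
    refine congrArg _ (sum_congr rfl fun ⟨i, j⟩ hij ↦ ?_)
    rw [n.choose_symm_of_eq_add (mem_antidiagonal.1 hij).symm, mul_comm]

theorem apply_pow_eq_zero {s : B} (hs : D s = 0) (n : ℕ) : D (s ^ n) = 0 := by
  simp [leibniz_pow, hs]

theorem apply_mul_of_apply_eq_zero {s : B} (hs : D s = 0) (b : B) : D (s * b) = s * D b := by
  simp [leibniz, hs]

theorem iterate_eq_zero_of_le {b : B} {n m : ℕ} (hn : D^[n] b = 0) (hnm : n ≤ m) :
    D^[m] b = 0 := by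
  obtain ⟨k, rfl⟩ := Nat.exists_eq_add_of_le hnm
  rw [add_comm, Function.iterate_add_apply, hn, iterate_map_zero]

variable [IsDomain B] [CharZero B]

/-- The degree function `b ↦ max {p | D^[p] b ≠ 0}` is additive on products. -/
theorem iterate_add_apply_mul_ne_zero {a b : B} {p q : ℕ} (ha : D^[p] a ≠ 0)
    (ha' : D^[p + 1] a = 0) (hb : D^[q] b ≠ 0) (hb' : D^[q + 1] b = 0) :
    D^[p + q] (a * b) ≠ 0 := by
  rw [iterate_apply_mul, sum_eq_single (p, q)]
  · exact smul_ne_zero (Nat.choose_pos (Nat.le_add_right p q)).ne' (mul_ne_zero ha hb)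
  · rintro ⟨i, j⟩ hij hne
    rw [HasAntidiagonal.mem_antidiagonal] at hij
    rcases lt_or_ge p i with hi | hi
    · rw [D.iterate_eq_zero_of_le ha' hi, zero_mul, smul_zero]
    · rw [D.iterate_eq_zero_of_le hb' (by grind), mul_zero, smul_zero]
  · simp

theorem isFactoriallyClosed_ker (hD : ∀ b, ∃ n, D^[n] b = 0) :
    IsFactoriallyClosed {b | D b = 0} := by
  intro a b ha hb hab
  obtain ⟨p, hpa, hpa'⟩ :=
    (hD a).elim fun _ ↦ Function.exists_iterate_ne_zero_iterate_succ_eq_zero ha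
  obtain ⟨q, hqb, hqb'⟩ :=
    (hD b).elim fun _ ↦ Function.exists_iterate_ne_zero_iterate_succ_eq_zero hb
  obtain rfl | hp := Nat.eq_zero_or_pos p
  · exact hpa'
  · refine absurd ?_ (D.iterate_add_apply_mul_ne_zero hpa hpa' hqb hqb')
    exact D.iterate_eq_zero_of_le (n := 1) hab (by omega)

end Derivation

namespace Polynomial

variable {R : Type*} [CommRing R] [IsDomain R]

theorem isPrimitive_of_irreducible {p : R[X]} (hp : Irreducible p) (hdeg : p.natDegree ≠ 0) :
    p.IsPrimitive := by
  rintro r ⟨q, rfl⟩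
  refine (hp.isUnit_or_isUnit rfl).elim isUnit_C.mp fun hq ↦ absurd ?_ hdeg
  exact Nat.le_zero.mp ((natDegree_C_mul_le r q).trans (natDegree_eq_zero_of_isUnit hq).le)

variable [UniqueFactorizationMonoid R]

theorem dvd_of_resultant_eq_zero {φ p : R[X]} (hφ : Irreducible φ) (hdeg : φ.natDegree ≠ 0)
    (h : resultant φ p = 0) : φ ∣ p := by
  let K := FractionRing R
  have hprim := isPrimitive_of_irreducible hφ hdeg
  have hinj : Function.Injective (algebraMap R K) := IsFractionRing.injective R K
  rw [hprim.dvd_iff_fraction_map_dvd_fraction_map K,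
    ((hprim.irreducible_iff_irreducible_map_fraction_map (K := K)).mp hφ).dvd_iff_not_isCoprime]
  refine fun hcop ↦ resultant_ne_zero _ _ hcop ?_
  rw [natDegree_map_eq_of_injective hinj, natDegree_map_eq_of_injective hinj, resultant_map_map, h,
    map_zero]

theorem exists_irreducible_forall_mem_iff_dvd {I : Ideal R[X]} [I.IsPrime] (hI : I ≠ ⊥)
    (hC : ∀ r, C r ∈ I → r = 0) :
    ∃ φ : R[X], Irreducible φ ∧ 1 ≤ φ.natDegree ∧ ∀ p, p ∈ I ↔ φ ∣ p := by
  obtain ⟨φ, hφI, hφ⟩ := Ideal.IsPrime.exists_mem_prime_of_ne_bot ‹_› hI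
  have hdeg : φ.natDegree ≠ 0 := fun h ↦ by
    rw [eq_C_of_natDegree_eq_zero h] at hφI
    exact hφ.ne_zero (by rw [eq_C_of_natDegree_eq_zero h, hC _ hφI, C_0])
  refine ⟨φ, hφ.irreducible, Nat.one_le_iff_ne_zero.mpr hdeg, fun p ↦ ⟨fun hp ↦ ?_,
    fun h ↦ Ideal.mem_of_dvd _ h hφI⟩⟩
  obtain ⟨a, b, -, -, hab⟩ := exists_mul_add_mul_eq_C_resultant φ p le_rfl le_rfl (Or.inl hdeg)
  have hres : C (resultant φ p) ∈ I :=
    hab ▸ add_mem (I.mul_mem_right _ hφI) (I.mul_mem_right _ hp)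
  exact dvd_of_resultant_eq_zero hφ.irreducible hdeg (hC _ hres)

end Polynomial

namespace Algebra

variable {R B : Type*} [CommRing R] [CommRing B] [Algebra R B] {x z : B}

theorem exists_aeval_add_mul_of_mem_adjoin_pair {a : B} (ha : a ∈ adjoin R {x, z}) :
    ∃ q : R[X], ∃ a' ∈ adjoin R {x, z}, a = aeval z q + x * a' := by
  have hmem (q : R[X]) : aeval z q ∈ adjoin R {x, z} :=
    adjoin_mono (by simp) (aeval_mem_adjoin_singleton R z)
  induction ha using adjoin_induction with
  | mem a ha =>
    rcases ha with rfl | rfl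
    · exact ⟨0, 1, one_mem _, by simp⟩
    · exact ⟨X, 0, zero_mem _, by simp⟩
  | algebraMap r => exact ⟨C r, 0, zero_mem _, by simp⟩
  | add a b _ _ iha ihb =>
    obtain ⟨p, a', ha', rfl⟩ := iha
    obtain ⟨q, b', hb', rfl⟩ := ihb
    exact ⟨p + q, a' + b', add_mem ha' hb', by rw [map_add]; ring⟩
  | mul a b _ _ iha ihb =>
    obtain ⟨p, a', ha', rfl⟩ := iha
    obtain ⟨q, b', hb', rfl⟩ := ihb
    refine ⟨p * q, a' * aeval z q + aeval z p * b' + x * a' * b', ?_, by rw [map_mul]; ring⟩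
    have hx : x ∈ adjoin R {x, z} := subset_adjoin (by simp)
    exact add_mem (add_mem (mul_mem ha' (hmem q)) (mul_mem (hmem p) hb'))
      (mul_mem (mul_mem hx ha') hb')

theorem mem_adjoin_pair_of_pow_mul_mem (hx : IsLeftRegular x)
    (hz : ∀ q : R[X], aeval z q ∈ Ideal.span {x} → q = 0) {b : B} {N : ℕ}
    (hb : x ^ N * b ∈ adjoin R {x, z}) : b ∈ adjoin R {x, z} := by
  induction N generalizing b with
  | zero => simpa using hb
  | succ N ih =>
    refine ih ?_
    obtain ⟨q, a', ha', h⟩ := exists_aeval_add_mul_of_mem_adjoin_pair hb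
    have hq : q = 0 := hz q (Ideal.mem_span_singleton'.mpr ⟨x ^ N * b - a', by
      linear_combination h⟩)
    rw [hq, map_zero, zero_add, pow_succ', mul_assoc] at h
    exact hx h ▸ ha'

end Algebra

namespace Derivation

variable {k R B : Type*} [Field k] [CharZero k] [CommRing R] [Algebra k R] [CommRing B]
  [Algebra k B] [Algebra R B] [IsScalarTower k R B] (D : Derivation k B B) {x z : B}

/-- Antiderivatives in `R[x, z]`: `x ^ i * z ^ j * D z = D ((j + 1)⁻¹ • x ^ i * z ^ (j + 1))`.
-/
theorem exists_mem_adjoin_apply_eq_mul (hR : ∀ r : R, D (algebraMap R B r) = 0) (hx : D x = 0)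
    {a : B} (ha : a ∈ adjoin R {x, z}) :
    ∃ a' ∈ adjoin R {x, z}, D a' = a * D z := by
  rw [← Subalgebra.mem_toSubmodule, adjoin_eq_span] at ha
  induction ha using Submodule.span_induction with
  | mem a ha =>
    obtain ⟨i, j, rfl⟩ := (Submonoid.mem_closure_pair x z a).mp ha
    refine ⟨((j + 1 : ℕ) : k)⁻¹ • (x ^ i * z ^ (j + 1)), ?_, ?_⟩
    · rw [← algebraMap_smul R]
      exact Subalgebra.smul_mem _ (mul_mem (pow_mem (subset_adjoin (by simp)) i)
        (pow_mem (subset_adjoin (by simp)) (j + 1))) _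
    · rw [map_smul, D.apply_mul_of_apply_eq_zero (D.apply_pow_eq_zero hx i), leibniz_pow,
        Nat.add_sub_cancel, ← Nat.cast_smul_eq_nsmul k, mul_smul_comm, smul_smul,
        inv_mul_cancel₀ (Nat.cast_ne_zero.mpr j.succ_ne_zero), one_smul, smul_eq_mul, mul_assoc]
  | zero => exact ⟨0, zero_mem _, by simp⟩
  | add a b _ _ iha ihb =>
    obtain ⟨a', ha', hDa'⟩ := iha
    obtain ⟨b', hb', hDb'⟩ := ihb
    exact ⟨a' + b', add_mem ha' hb', by rw [map_add, hDa', hDb', add_mul]⟩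
  | smul r a _ iha =>
    obtain ⟨a', ha', hDa'⟩ := iha
    refine ⟨r • a', Subalgebra.smul_mem _ ha' r, ?_⟩
    rw [Algebra.smul_def, Algebra.smul_def, D.apply_mul_of_apply_eq_zero (hR r), hDa', mul_assoc]

/-- The induction on the nilpotency order of `b` behind `B[(D z)⁻¹] = ker D [(D z)⁻¹][z]`. -/
theorem exists_pow_mul_mem_adjoin (hR : ∀ r : R, D (algebraMap R B r) = 0) (hx : D x = 0)
    (hDz : D (D z) = 0) (hker : ∀ b, D b = 0 → b ∈ adjoin R {x, z}) {b : B} {n : ℕ}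
    (hb : D^[n] b = 0) :
    ∃ N, D z ^ N * b ∈ adjoin R {x, z} := by
  induction n generalizing b with
  | zero => exact ⟨0, by simp [show b = 0 from hb]⟩
  | succ n ih =>
    obtain ⟨N, hN⟩ := ih (b := D b) hb
    obtain ⟨a', ha', hDa'⟩ := D.exists_mem_adjoin_apply_eq_mul hR hx hN
    have hconst : D (D z ^ (N + 1) * b - a') = 0 := by
      rw [map_sub, D.apply_mul_of_apply_eq_zero (D.apply_pow_eq_zero hDz _), hDa']
      ring
    exact ⟨N + 1, by simpa using add_mem (hker _ hconst) ha'⟩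

theorem adjoin_pair_eq_top (hD : ∀ b, ∃ n, D^[n] b = 0)
    (hR : ∀ r : R, D (algebraMap R B r) = 0) (hx : D x = 0) (hx_reg : IsLeftRegular x) {m : ℕ}
    (hDz : D z = x ^ m) (hker : ∀ b, D b = 0 → b ∈ adjoin R {x, z})
    (hz : ∀ q : R[X], aeval z q ∈ Ideal.span {x} → q = 0) : adjoin R {x, z} = ⊤ := by
  refine Algebra.eq_top_iff.mpr fun b ↦ ?_
  obtain ⟨n, hn⟩ := hD b
  have hDDz : D (D z) = 0 := by rw [hDz]; exact D.apply_pow_eq_zero hx m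
  obtain ⟨N, hN⟩ := D.exists_pow_mul_mem_adjoin hR hx hDDz hker hn
  rw [hDz, ← pow_mul] at hN
  exact mem_adjoin_pair_of_pow_mul_mem hx_reg hz hN

end Derivation

theorem stmt_13_general {k R B : Type*} [Field k] [CharZero k]
    [CommRing R] [IsDomain R] [Algebra k R]
    [UniqueFactorizationMonoid R]
    [CommRing B] [IsDomain B] [Algebra k B] [Algebra R B] [IsScalarTower k R B]
    [UniqueFactorizationMonoid B]
    (D : Derivation k B B)
    (hln : ∀ b : B, ∃ n : ℕ, (⇑D)^[n] b = 0)
    (x : B) (hx : Transcendental R x)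
    (hker : ∀ b : B, D b = 0 ↔ b ∈ Algebra.adjoin R ({x} : Set B))
    (z : B)
    (m : ℕ) (hDz : D z = x ^ m)
    (hne : Algebra.adjoin R ({x, z} : Set B) ≠ ⊤) :
    ∃ φ : Polynomial R, Irreducible φ ∧ 1 ≤ φ.natDegree ∧
      ∀ p : Polynomial R,
        Polynomial.aeval z p ∈ Ideal.span ({x} : Set B) ↔ φ ∣ p := by
  have : CharZero B := charZero_of_injective_algebraMap (algebraMap k B).injective
  have hinj : Function.Injective (aeval x : R[X] →ₐ[R] B) := transcendental_iff_injective.mp hx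
  have hfc : IsFactoriallyClosed (Set.range (aeval x : R[X] →ₐ[R] B)) := by
    convert D.isFactoriallyClosed_ker hln using 1
    ext b
    rw [Set.mem_ofPred_eq, hker, adjoin_singleton_eq_range_aeval, AlgHom.mem_range, Set.mem_range]
  have hx_prime : Prime x := by simpa using (hfc.irreducible_map hinj irreducible_X).prime
  have hconst : ∀ r : R, algebraMap R B r ∈ Ideal.span {x} → r = 0 := by
    intro r hr
    rw [Ideal.mem_span_singleton, ← aeval_X (R := R) x, ← aeval_C x r] at hr
    simpa using X_dvd_iff.mp (hfc.dvd_of_map_dvd_map hinj hr)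
  have : (Ideal.span {x}).IsPrime := (Ideal.span_singleton_prime hx_prime.ne_zero).mpr hx_prime
  have hDR (r : R) : D (algebraMap R B r) = 0 := (hker _).mpr (Subalgebra.algebraMap_mem _ r)
  have hDx : D x = 0 := (hker x).mpr (self_mem_adjoin_singleton R x)
  refine exists_irreducible_forall_mem_iff_dvd (I := (Ideal.span {x}).comap (aeval z))
    (fun hI ↦ hne (D.adjoin_pair_eq_top hln hDR hDx
      (IsLeftCancelMulZero.mul_left_cancel_of_ne_zero hx_prime.ne_zero) hDz
      (fun b hb ↦ adjoin_mono (by simp) ((hker b).mp hb)) fun q hq ↦ ?_))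
    fun r hr ↦ hconst r (by simpa using hr)
  simpa [hI] using Ideal.mem_comap.mpr hq

/-- Let `k` be a field of characteristic zero, `R` a factorial
affine `k`-domain, and `B` a factorial affine `R`-domain.  Suppose there is a
non-trivial locally nilpotent `k`-derivation `D` on `B` such that (i) `ker D = R[x]`
for some `x ∈ B` transcendental over `R`, and (ii) there is `z ∈ B \ xB` with
`D(z) = x^m` for some `m ≥ 1`.  If `B ≠ R[x,z]`, then `R[z] ∩ xB = φ(z)·R[z]` where
`φ` is an irreducible element of the polynomial ring `R[z]` with `deg_z φ ≥ 1`
(here `R[z] ∩ xB` is described, via the identification of `R[z]` with the polynomial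
ring over `R`, as the set of `p` with `p(z) ∈ xB`). -/
theorem stmt_13 {k R B : Type*} [Field k] [CharZero k]
    [CommRing R] [IsDomain R] [Algebra k R] [Algebra.FiniteType k R]
    [UniqueFactorizationMonoid R]
    [CommRing B] [IsDomain B] [Algebra k B] [Algebra R B] [IsScalarTower k R B]
    [Algebra.FiniteType R B] [UniqueFactorizationMonoid B]
    (D : Derivation k B B) (hD0 : D ≠ 0)
    (hln : ∀ b : B, ∃ n : ℕ, (⇑D)^[n] b = 0)
    (x : B) (hx : Transcendental R x)
    (hker : ∀ b : B, D b = 0 ↔ b ∈ Algebra.adjoin R ({x} : Set B))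
    (z : B) (hz : z ∉ Ideal.span ({x} : Set B))
    (m : ℕ) (hm : 1 ≤ m) (hDz : D z = x ^ m)
    (hne : Algebra.adjoin R ({x, z} : Set B) ≠ ⊤) :
    ∃ φ : Polynomial R, Irreducible φ ∧ 1 ≤ φ.natDegree ∧
      ∀ p : Polynomial R,
        Polynomial.aeval z p ∈ Ideal.span ({x} : Set B) ↔ φ ∣ p :=
  stmt_13_general D hln x hx hker z m hDz hne
end

section
/- Let R be an integral domain, B an integral domain containing R as a subring, n ≥ 2 an integer, and a, b₁, …, b_n ∈ B \ R with a ≠ 0. Assume: (i) B is contained in the subring R[a, a⁻¹, b₁, …, b_n] of Frac(B); (ii) b₁, …, b_{n−1} are algebraically independent over R, so S := R[b₁,…,b_{n−1}] is a polynomial ring in n−1 variables over R, and there exist polynomials φ_i ∈ R[T₁,…,T_i] for 1 ≤ i ≤ n−1 such that S ∩ aB = (φ₁(b₁), φ₂(b₁,b₂), …, φ_{n−1}(b₁,…,b_{n−1}))·S, and for each i there exist an integer l_i > 0 and a polynomial g_i in i+2 variables over R with φ_i(b₁,…,b_i) = a^{l_i}·g_i(a, b₁, …, b_{i+1}) in B;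 and (iii) the image of b_n in B/aB is transcendental over the R-subalgebra of B/aB generated by the images of b₁, …, b_{n−1}. Then B = R[a, b₁, …, b_n], i.e., B is generated as an R-algebra by a, b₁, …, b_n. -/
/-!
Let `A = R[a, b₁, …, b_n]`. By (i) every `β ∈ B` satisfies `a ^ N * β ∈ A` for some `N`, so it
suffices to show `A ∩ aB = aA`. Modulo `aA`, every element of `A` is a polynomial in `b_n` with
coefficients in `S = R[b₁, …, b_{n-1}]`. If it lies in `aB`, transcendence of `b_n` modulo `aB`
puts every coefficient in `S ∩ aB`, which by (ii) is generated by the `φ_i(b)`; each of these is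
divisible by `a` in `A`, since `l_i > 0`.
-/

open MvPolynomial Algebra Set

section
variable {R B σ : Type*} [CommRing R] [CommRing B] [Algebra R B]

theorem MvPolynomial.aeval_mem_of_forall_mem {A : Subalgebra R B} {v : σ → B} (hv : ∀ i, v i ∈ A)
    (p : MvPolynomial σ R) : aeval v p ∈ A :=
  adjoin_le (range_subset_iff.2 hv) (adjoin_range_eq_range_aeval R v ▸ ⟨p, rfl⟩)

theorem exists_eq_mul_add_eval₂_of_mem_adjoin {a t : B} {c : σ → B} {x : B}
    (hx : x ∈ adjoin R (insert a (insert t (range c)))) :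
    ∃ q ∈ adjoin R (insert a (insert t (range c))), ∃ Q : Polynomial (MvPolynomial σ R),
      x = a * q + Q.eval₂ (aeval c).toRingHom t := by
  induction hx using Algebra.adjoin_induction with
  | mem x hx =>
    rcases hx with rfl | rfl | ⟨i, rfl⟩
    · exact ⟨1, one_mem _, 0, by simp⟩
    · exact ⟨0, zero_mem _, .X, by simp⟩
    · exact ⟨0, zero_mem _, .C (X i), by simp⟩
  | algebraMap r => exact ⟨0, zero_mem _, .C (C r), by simp⟩
  | add x y _ _ hx hy =>
    obtain ⟨q₁, hq₁, Q₁, rfl⟩ := hx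
    obtain ⟨q₂, hq₂, Q₂, rfl⟩ := hy
    exact ⟨q₁ + q₂, add_mem hq₁ hq₂, Q₁ + Q₂, by rw [Polynomial.eval₂_add]; ring⟩
  | mul x y hx' hy' hx hy =>
    obtain ⟨q₁, hq₁, Q₁, hQ₁⟩ := hx
    obtain ⟨q₂, hq₂, Q₂, hQ₂⟩ := hy
    have ha : a ∈ adjoin R (insert a (insert t (range c))) := subset_adjoin (mem_insert _ _)
    have hQ₁mem : Q₁.eval₂ (aeval c).toRingHom t ∈ adjoin R (insert a (insert t (range c))) := by
      rw [eq_sub_of_add_eq' hQ₁.symm]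
      exact sub_mem hx' (mul_mem ha hq₁)
    refine ⟨q₁ * y + Q₁.eval₂ (aeval c).toRingHom t * q₂,
      add_mem (mul_mem hq₁ hy') (mul_mem hQ₁mem hq₂), Q₁ * Q₂, ?_⟩
    rw [Polynomial.eval₂_mul]
    linear_combination y * hQ₁ + Q₁.eval₂ (aeval c).toRingHom t * hQ₂

theorem aeval_coeff_eq_zero_of_transcendental {D : Type*} [CommRing D] [Algebra R D] {s : σ → D}
    {t : D} (ht : Transcendental (adjoin R (range s)) t) {Q : Polynomial (MvPolynomial σ R)}
    (hQ : Q.eval₂ (aeval s).toRingHom t = 0) (k : ℕ) :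
    aeval s (Q.coeff k) = 0 := by
  rw [adjoin_range_eq_range_aeval] at ht
  have hQ' : Q.map (aeval s).rangeRestrict.toRingHom = 0 :=
    transcendental_iff.1 ht _ (by rwa [Polynomial.aeval_def, Polynomial.eval₂_map])
  simpa using congrArg (fun P => ((P.coeff k : (aeval s).range) : D)) hQ'

theorem exists_eq_mul_of_mem_span_range {ι : Type*} {A : Subalgebra R B} {a : B} {c : σ → B}
    (hc : ∀ i, c i ∈ A) {F : ι → MvPolynomial σ R} (hF : ∀ i, ∃ y ∈ A, aeval c (F i) = a * y)
    {p : MvPolynomial σ R} (hp : p ∈ Ideal.span (range F)) : ∃ y ∈ A, aeval c p = a * y := by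
  induction hp using Submodule.span_induction with
  | mem _ hx => obtain ⟨i, rfl⟩ := hx; exact hF i
  | zero => exact ⟨0, zero_mem _, by simp⟩
  | add _ _ _ _ hx hy =>
    obtain ⟨y₁, hy₁, h₁⟩ := hx
    obtain ⟨y₂, hy₂, h₂⟩ := hy
    exact ⟨y₁ + y₂, add_mem hy₁ hy₂, by rw [map_add, h₁, h₂, mul_add]⟩
  | smul r _ _ hx =>
    obtain ⟨y, hy, h⟩ := hx
    exact ⟨aeval c r * y, mul_mem (aeval_mem_of_forall_mem hc r) hy,
      by rw [smul_eq_mul, map_mul, h, mul_left_comm]⟩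

theorem mem_adjoin_of_mul_mem_adjoin [IsDomain B] {a t : B} {c : σ → B} (ha : a ≠ 0)
    (hS : ∀ p : MvPolynomial σ R, aeval c p ∈ Ideal.span {a} →
      ∃ y ∈ adjoin R (insert a (insert t (range c))), aeval c p = a * y)
    (ht : Transcendental
      (adjoin R (range fun i => Ideal.Quotient.mk (Ideal.span {a}) (c i)))
      (Ideal.Quotient.mk (Ideal.span {a}) t))
    {β : B} (hβ : a * β ∈ adjoin R (insert a (insert t (range c)))) :
    β ∈ adjoin R (insert a (insert t (range c))) := by
  obtain ⟨q, hq, Q, hQ⟩ := exists_eq_mul_add_eval₂_of_mem_adjoin hβ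
  have hcoeff : ∀ k, aeval c (Q.coeff k) ∈ Ideal.span {a} := by
    intro k
    rw [← Ideal.Quotient.eq_zero_iff_mem, ← Ideal.Quotient.mkₐ_eq_mk R, comp_aeval_apply]
    refine aeval_coeff_eq_zero_of_transcendental ht ?_ k
    have h0 : Ideal.Quotient.mkₐ R (Ideal.span {a}) (Q.eval₂ (aeval c).toRingHom t) = 0 := by
      rw [Ideal.Quotient.mkₐ_eq_mk, Ideal.Quotient.eq_zero_iff_mem, eq_sub_of_add_eq' hQ.symm,
        ← mul_sub]
      exact Ideal.mul_mem_right _ _ (Ideal.mem_span_singleton_self a)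
    rw [← AlgHom.coe_toRingHom, Polynomial.hom_eval₂] at h0
    have hcomp :
        (Ideal.Quotient.mkₐ R (Ideal.span {a}) : B →+* _).comp (aeval (R := R) c).toRingHom =
          (aeval fun i => Ideal.Quotient.mk (Ideal.span {a}) (c i)).toRingHom := by
      ext <;> simp
    rwa [hcomp] at h0
  choose y hy hya using fun k => hS _ (hcoeff k)
  have hQa : Q.eval₂ (aeval c).toRingHom t = a * Q.sum fun k _ => y k * t ^ k := by
    rw [Polynomial.eval₂_eq_sum, Polynomial.sum_def, Polynomial.sum_def, Finset.mul_sum]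
    exact Finset.sum_congr rfl fun k _ =>
      (congrArg (· * t ^ k) (hya k)).trans (mul_assoc _ _ _)
  have hβq : β = q + Q.sum fun k _ => y k * t ^ k :=
    mul_left_cancel₀ ha (by rw [mul_add, ← hQa, ← hQ])
  have htA : t ∈ adjoin R (insert a (insert t (range c))) :=
    subset_adjoin (mem_insert_of_mem _ (mem_insert _ _))
  rw [hβq]
  exact add_mem hq (Subalgebra.sum_mem _ fun k _ => mul_mem (hy k) (pow_mem htA _))

theorem exists_pow_mul_mem_adjoin_of_mem_adjoin_insert {K : Type*} [CommRing K] [Algebra R K]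
    [Algebra B K] [IsScalarTower R B K] (hf : Function.Injective (algebraMap B K)) {s : Set B}
    {a : B} (ha : a ∈ adjoin R s) {u : K} (hu : algebraMap B K a * u = 1) {β : B}
    (hβ : algebraMap B K β ∈ adjoin R (insert u (algebraMap B K '' s))) :
    ∃ N : ℕ, a ^ N * β ∈ adjoin R s := by
  have key : ∀ z ∈ adjoin R (insert u (algebraMap B K '' s)),
      ∃ N : ℕ, ∃ x ∈ adjoin R s, algebraMap B K a ^ N * z = algebraMap B K x := by
    intro z hz
    induction hz using Algebra.adjoin_induction with
    | mem z hz =>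
      rcases hz with rfl | ⟨x, hx, rfl⟩
      · exact ⟨1, 1, one_mem _, by rw [pow_one, hu, map_one]⟩
      · exact ⟨0, x, subset_adjoin hx, by rw [pow_zero, one_mul]⟩
    | algebraMap r =>
      exact ⟨0, algebraMap R B r, Subalgebra.algebraMap_mem _ r,
        by rw [pow_zero, one_mul, ← IsScalarTower.algebraMap_apply]⟩
    | add z w _ _ hz hw =>
      obtain ⟨N, x, hx, hxz⟩ := hz
      obtain ⟨M, y, hy, hyw⟩ := hw
      refine ⟨N + M, a ^ M * x + a ^ N * y,
        add_mem (mul_mem (pow_mem ha _) hx) (mul_mem (pow_mem ha _) hy), ?_⟩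
      rw [map_add, map_mul, map_mul, map_pow, map_pow, ← hxz, ← hyw]
      ring
    | mul z w _ _ hz hw =>
      obtain ⟨N, x, hx, hxz⟩ := hz
      obtain ⟨M, y, hy, hyw⟩ := hw
      exact ⟨N + M, x * y, mul_mem hx hy, by rw [map_mul, ← hxz, ← hyw]; ring⟩
  obtain ⟨N, x, hx, hxβ⟩ := key _ hβ
  refine ⟨N, ?_⟩
  rwa [hf (by rw [map_mul, map_pow, hxβ] : algebraMap B K (a ^ N * β) = algebraMap B K x)]

theorem Fin.range_eq_insert_range_castLE {α : Type*} {n : ℕ} (b : Fin n → α) (h : n - 1 < n) :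
    range b =
      insert (b ⟨n - 1, h⟩) (range fun i : Fin (n - 1) => b (Fin.castLE (n.sub_le 1) i)) := by
  ext x
  constructor
  · rintro ⟨j, rfl⟩
    by_cases hj : (j : ℕ) = n - 1
    · exact .inl (congrArg b (Fin.ext hj))
    · exact .inr ⟨⟨j, by omega⟩, rfl⟩
  · rintro (rfl | ⟨i, rfl⟩) <;> exact ⟨_, rfl⟩

theorem Subalgebra.eq_top_of_forall_pow_mul_mem {A : Subalgebra R B} {a : B}
    (hcancel : ∀ β, a * β ∈ A → β ∈ A) (hpow : ∀ β, ∃ N : ℕ, a ^ N * β ∈ A) : A = ⊤ := by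
  have hpow_cancel : ∀ (N : ℕ) β, a ^ N * β ∈ A → β ∈ A := by
    intro N
    induction N with
    | zero => simp
    | succ N ih => exact fun β h => hcancel β (ih _ (by rwa [← mul_assoc, ← pow_succ]))
  exact eq_top_iff.2 fun β _ => (hpow β).elim (hpow_cancel · β)

end

/-- Let `R ⊆ B` be integral domains, `n ≥ 2`, and
`a, b₁, …, b_n ∈ B \ R` with `a ≠ 0`.  Assume:
(i) `B ⊆ R[a, a⁻¹, b₁, …, b_n]` inside `Frac B`;
(ii) `b₁, …, b_{n−1}` are algebraically independent over `R` and, identifying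
`S := R[b₁,…,b_{n−1}]` with a polynomial ring in `n−1` variables,
`S ∩ aB = (φ₁(b₁), …, φ_{n−1}(b₁,…,b_{n−1}))·S` for polynomials `φ_i ∈ R[T₁,…,T_i]`
such that `φ_i(b₁,…,b_i) = a^{l_i}·g_i(a, b₁, …, b_{i+1})` in `B` with `l_i > 0` and
`g_i` a polynomial in `i+2` variables over `R`; and
(iii) the image of `b_n` in `B/aB` is transcendental over the `R`-subalgebra generated
by the images of `b₁, …, b_{n−1}`.
Then `B = R[a, b₁, …, b_n]`.
(Indexing: `b : Fin n → B` is `0`-based, so `b i` is the mathematical `b_{i+1}`.) -/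
theorem stmt_15 {R B : Type*} [CommRing R] [CommRing B] [IsDomain B]
    [Algebra R B]
    (n : ℕ) (hn : 2 ≤ n)
    (a : B) (ha0 : a ≠ 0)
    (b : Fin n → B)
    -- (i) `B ⊆ R[a, a⁻¹, b₁, …, b_n]` inside the fraction field of `B`
    (hi : ∀ β : B, algebraMap B (FractionRing B) β ∈
      Algebra.adjoin R
        (insert ((algebraMap B (FractionRing B) a)⁻¹)
          (insert (algebraMap B (FractionRing B) a)
            (Set.range fun i : Fin n => algebraMap B (FractionRing B) (b i)))))
    (φ : (i : Fin (n - 1)) → MvPolynomial (Fin ((i : ℕ) + 1)) R)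
    -- `S ∩ aB` is generated by the `φ_i(b₁,…,b_i)`
    (hSa : ∀ p : MvPolynomial (Fin (n - 1)) R,
      MvPolynomial.aeval (fun i : Fin (n - 1) => b (Fin.castLE (Nat.sub_le n 1) i)) p ∈
          Ideal.span ({a} : Set B) ↔
        p ∈ Ideal.span
          (Set.range fun i : Fin (n - 1) => MvPolynomial.rename (Fin.castLE i.isLt) (φ i)))
    -- `φ_i(b₁,…,b_i) = a^{l_i}·g_i(a, b₁, …, b_{i+1})` with `l_i > 0`
    (l : Fin (n - 1) → ℕ) (hl : ∀ i, 0 < l i)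
    (g : (i : Fin (n - 1)) → MvPolynomial (Fin ((i : ℕ) + 2 + 1)) R)
    (hφ : ∀ i : Fin (n - 1),
      MvPolynomial.aeval
          (fun j : Fin ((i : ℕ) + 1) => b (Fin.castLE (by have := i.isLt; omega) j)) (φ i) =
        a ^ l i *
          MvPolynomial.aeval
            (Fin.cons a fun j : Fin ((i : ℕ) + 2) =>
              b (Fin.castLE (by have := i.isLt; omega) j)) (g i))
    -- (iii) the image of `b_n` in `B/aB` is transcendental over the images of the others
    (htr : Transcendental
      ↥(Algebra.adjoin R
        (Set.range fun i : Fin (n - 1) =>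
          Ideal.Quotient.mk (Ideal.span ({a} : Set B)) (b (Fin.castLE (Nat.sub_le n 1) i))))
      (Ideal.Quotient.mk (Ideal.span ({a} : Set B)) (b ⟨n - 1, by omega⟩))) :
    Algebra.adjoin R (insert a (Set.range b)) = ⊤ := by
  set c : Fin (n - 1) → B := fun i => b (Fin.castLE (Nat.sub_le n 1) i)
  have haA : a ∈ adjoin R (insert a (range b)) := subset_adjoin (mem_insert _ _)
  have hbA : ∀ j, b j ∈ adjoin R (insert a (range b)) :=
    fun j => subset_adjoin (mem_insert_of_mem _ ⟨j, rfl⟩)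
  have hφA : ∀ i : Fin (n - 1), ∃ y ∈ adjoin R (insert a (range b)),
      aeval c (rename (Fin.castLE i.isLt) (φ i)) = a * y := by
    intro i
    refine ⟨a ^ (l i - 1) * ?_, ?mem, ?eq⟩
    case eq =>
      rw [aeval_rename, ← mul_assoc, ← pow_succ', Nat.sub_add_cancel (hl i)]
      exact hφ i
    case mem =>
      refine mul_mem (pow_mem haA _) (aeval_mem_of_forall_mem (fun j => ?_) (g i))
      cases j using Fin.cases <;> simp [haA, hbA]
  have hS : ∀ p, aeval c p ∈ Ideal.span {a} → ∃ y ∈ adjoin R (insert a (range b)),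
      aeval c p = a * y :=
    fun p hp => exists_eq_mul_of_mem_span_range (fun _ => hbA _) hφA ((hSa p).1 hp)
  refine Subalgebra.eq_top_of_forall_pow_mul_mem (a := a) (fun β hβ => ?_) (fun β => ?_)
  · rw [Fin.range_eq_insert_range_castLE b (by omega)] at hS hβ ⊢
    exact mem_adjoin_of_mul_mem_adjoin ha0 hS htr hβ
  · have hf := IsFractionRing.injective B (FractionRing B)
    refine exists_pow_mul_mem_adjoin_of_mem_adjoin_insert hf haA
      (mul_inv_cancel₀ ((map_ne_zero_iff _ hf).2 ha0)) ?_
    rw [image_insert_eq, ← range_comp]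
    exact hi β
end
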